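/- arXiv:0805.4547 — 7 statements merged into one kernel-verified Lean document; each statement's English description precedes it below -/
import Mathlib

section
/- For every f in the strong Schwartz space 𝐒(ℝ₊ˣ), the Mellin transform integral M(f)(s) = ∫₀^∞ f(x) x^s dx/x converges absolutely for every s ∈ ℂ, and the function s ↦ M(f)(s) is entire (complex differentiable on all of ℂ). -/
open MeasureTheory Set Filter Asymptotics

/-- The Mellin transform `M(g)(s) = ∫₀^∞ g(x) x^s dx/x`. -/
noncomputable def mellinT (g : ℝ → ℂ) (s : ℂ) : ℂ :=
  ∫ x in Set.Ioi (0:ℝ), g x * (x : ℂ) ^ s / (x : ℂ)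

/-- The multiplicative convolution `(f ∗ g)(x) = ∫₀^∞ f(x/y) g(y) dy/y`. -/
noncomputable def mulConv (f g : ℝ → ℂ) (x : ℝ) : ℂ :=
  ∫ y in Set.Ioi (0:ℝ), f (x / y) * g y / (y : ℂ)

/-- The strong Schwartz space `𝐒(ℝ₊ˣ)`: smooth functions on `(0,∞)` such that
`sup_{x>0} |x^m f⁽ⁿ⁾(x)| < ∞` for every `m : ℤ` and `n : ℕ`. -/
def IsStrongSchwartz (f : ℝ → ℂ) : Prop :=
  ContDiffOn ℝ (⊤ : ℕ∞) f (Set.Ioi 0) ∧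
  ∀ (m : ℤ) (n : ℕ), ∃ C : ℝ,
    ∀ x ∈ Set.Ioi (0:ℝ), x ^ m * ‖iteratedDerivWithin n f (Set.Ioi 0) x‖ ≤ C

/-- `L¹_loc,poly(ℝ₊ˣ)`: locally integrable functions on `(0,∞)` with `h(x) = O(x^a)`
as `x → ∞` and `h(x) = O(x^(-a))` as `x → 0⁺` for some `a ≥ 0`. -/
def IsLocPoly (h : ℝ → ℂ) : Prop :=
  MeasureTheory.LocallyIntegrableOn h (Set.Ioi 0) ∧
  ∃ a : ℝ, 0 ≤ a ∧
    h =O[Filter.atTop] (fun x : ℝ => x ^ a) ∧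
    h =O[nhdsWithin 0 (Set.Ioi 0)] (fun x : ℝ => x ^ (-a))

/-- `h⁺(x) = h(x)` for `x < 1`, `0` otherwise. -/
noncomputable def hPlus (h : ℝ → ℂ) (x : ℝ) : ℂ := if x < 1 then h x else 0

/-- `h⁻(x) = h(x)` for `x ≥ 1`, `0` otherwise. -/
noncomputable def hMinus (h : ℝ → ℂ) (x : ℝ) : ℂ := if 1 ≤ x then h x else 0


lemma strongSchwartz_isBigO_atTop (f : ℝ → ℂ) (hf : IsStrongSchwartz f) (a : ℝ) :
    f =O[Filter.atTop] (fun x : ℝ => x ^ (-a)) := by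
  obtain ⟨C, hC⟩ := hf.2 ⌈a⌉ 0
  rw [Asymptotics.isBigO_iff]
  refine ⟨C, ?_⟩
  filter_upwards [Filter.eventually_ge_atTop 1] with x hx
  have hx0 : (0:ℝ) < x := lt_of_lt_of_le one_pos hx
  have h1 := hC x hx0
  rw [iteratedDerivWithin_zero] at h1
  have h2 : ‖f x‖ ≤ C * x ^ (-(⌈a⌉:ℝ)) := by
    have hz : (x:ℝ) ^ (⌈a⌉:ℤ) = x ^ ((⌈a⌉:ℤ):ℝ) := (Real.rpow_intCast x _).symm
    have hpos : (0:ℝ) < x ^ ((⌈a⌉:ℤ):ℝ) := Real.rpow_pos_of_pos hx0 _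
    rw [Real.rpow_neg hx0.le, ← div_eq_mul_inv, le_div_iff₀ hpos, mul_comm]
    calc x ^ ((⌈a⌉:ℤ):ℝ) * ‖f x‖ = x ^ (⌈a⌉:ℤ) * ‖f x‖ := by rw [hz]
      _ ≤ C := h1
  refine h2.trans ?_
  rw [Real.norm_of_nonneg (Real.rpow_nonneg hx0.le _)]
  have hC0 : 0 ≤ C := by
    have := hC 1 (by norm_num)
    simp only [iteratedDerivWithin_zero, one_zpow, one_mul] at this
    exact (norm_nonneg _).trans this
  gcongr
  · exact Int.le_ceil a

lemma strongSchwartz_isBigO_zero (f : ℝ → ℂ) (hf : IsStrongSchwartz f) (b : ℝ) :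
    f =O[nhdsWithin 0 (Set.Ioi 0)] (fun x : ℝ => x ^ (-b)) := by
  obtain ⟨C, hC⟩ := hf.2 ⌊b⌋ 0
  rw [Asymptotics.isBigO_iff]
  refine ⟨C, ?_⟩
  filter_upwards [Filter.inter_mem (Filter.inter_mem_inf (Metric.ball_mem_nhds 0 one_pos)
      (Filter.mem_principal_self _)) (self_mem_nhdsWithin)] with x hx
  obtain ⟨⟨hb, _⟩, hx0⟩ := hx
  simp only [Set.mem_Ioi] at hx0
  have hxlt : x < 1 := by
    have := abs_lt.mp (by simpa [Real.dist_eq] using hb)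
    exact this.2
  have h1 := hC x hx0
  rw [iteratedDerivWithin_zero] at h1
  have h2 : ‖f x‖ ≤ C * x ^ (-(⌊b⌋:ℝ)) := by
    have hz : (x:ℝ) ^ (⌊b⌋:ℤ) = x ^ ((⌊b⌋:ℤ):ℝ) := (Real.rpow_intCast x _).symm
    have hpos : (0:ℝ) < x ^ ((⌊b⌋:ℤ):ℝ) := Real.rpow_pos_of_pos hx0 _
    rw [Real.rpow_neg hx0.le, ← div_eq_mul_inv, le_div_iff₀ hpos, mul_comm]
    calc x ^ ((⌊b⌋:ℤ):ℝ) * ‖f x‖ = x ^ (⌊b⌋:ℤ) * ‖f x‖ := by rw [hz]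
      _ ≤ C := h1
  refine h2.trans ?_
  rw [Real.norm_of_nonneg (Real.rpow_nonneg hx0.le _)]
  have hC0 : 0 ≤ C := by
    have := hC 1 (by norm_num)
    simp only [iteratedDerivWithin_zero, one_zpow, one_mul] at this
    exact (norm_nonneg _).trans this
  refine mul_le_mul_of_nonneg_left ?_ hC0
  apply Real.rpow_le_rpow_of_exponent_ge hx0 hxlt.le
  push_cast
  exact neg_le_neg (Int.floor_le b)

lemma strongSchwartz_locInt (f : ℝ → ℂ) (hf : IsStrongSchwartz f) :
    MeasureTheory.LocallyIntegrableOn f (Set.Ioi 0) := by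
  exact (hf.1.continuousOn).locallyIntegrableOn measurableSet_Ioi

lemma mellinT_eq_mellin (f : ℝ → ℂ) : mellinT f = mellin f := by
  funext s
  unfold mellinT mellin
  refine MeasureTheory.setIntegral_congr_fun measurableSet_Ioi (fun x hx => ?_)
  have hx0 : (0:ℝ) < x := hx
  have hxne : (x:ℂ) ≠ 0 := by exact_mod_cast hx0.ne'
  rw [smul_eq_mul, Complex.cpow_sub _ _ hxne, Complex.cpow_one]
  ring

/-- For every `f` in the strong Schwartz space, the Mellin transform integral
converges absolutely for every `s ∈ ℂ`, and `s ↦ M(f)(s)` is entire. -/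
theorem mellin_strongSchwartz_convergent_and_entire (f : ℝ → ℂ) (hf : IsStrongSchwartz f) :
    (∀ s : ℂ, MeasureTheory.IntegrableOn
      (fun x : ℝ => f x * (x : ℂ) ^ s / (x : ℂ)) (Set.Ioi 0)) ∧
    Differentiable ℂ (mellinT f) := by
  
  have key : ∀ s : ℂ, MellinConvergent f s ∧ DifferentiableAt ℂ (mellin f) s := by
    intro s
    have h_top := strongSchwartz_isBigO_atTop f hf (s.re + 1)
    have h_bot := strongSchwartz_isBigO_zero f hf (s.re - 1)
    have hloc := strongSchwartz_locInt f hf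
    exact ⟨mellinConvergent_of_isBigO_rpow hloc h_top (by linarith) h_bot (by linarith),
      mellin_differentiableAt_of_isBigO_rpow hloc h_top (by linarith) h_bot (by linarith)⟩
  constructor
  · intro s
    have h := (key s).1
    refine h.congr_fun (fun x hx => ?_) measurableSet_Ioi
    have hx0 : (0:ℝ) < x := hx
    have hxne : (x:ℂ) ≠ 0 := by exact_mod_cast hx0.ne'
    beta_reduce
    rw [smul_eq_mul, Complex.cpow_sub _ _ hxne, Complex.cpow_one]
    ring
  · rw [mellinT_eq_mellin]
    exact fun s => (key s).2
end

section
/- If f ∈ 𝐒(ℝ₊ˣ) and M(f)(s) = 0 for every s ∈ ℂ, then f is identically zero. (Equivalently, the Mellin transform is injective on the strong Schwartz space.) -/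
open MeasureTheory Set Filter Asymptotics

open Real FourierTransform in
lemma mellinT_exp_aux (f : ℝ → ℂ) (s : ℂ) :
    mellinT f s = ∫ t : ℝ, f (Real.exp t) * Complex.exp (s * t) := by
  have h := integral_image_eq_integral_abs_deriv_smul (s := (univ : Set ℝ))
    (f := Real.exp) (f' := Real.exp) MeasurableSet.univ
    (fun x _ => (Real.hasDerivAt_exp x).hasDerivWithinAt)
    (Real.exp_injective.injOn) (fun x => f x * (x : ℂ) ^ s / (x : ℂ))
  rw [image_univ, Real.range_exp] at h
  rw [mellinT, h, MeasureTheory.setIntegral_univ]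
  congr 1
  ext t
  have he : (0:ℝ) < Real.exp t := Real.exp_pos t
  have hcpow : ((Real.exp t : ℝ) : ℂ) ^ s = Complex.exp (s * t) := by
    rw [Complex.cpow_def_of_ne_zero (by exact_mod_cast he.ne')]
    rw [Complex.ofReal_exp, Complex.log_exp (by simp [Real.pi_pos]) (by simp [Real.pi_pos.le])]
    ring_nf
  rw [hcpow, abs_of_pos he]
  rw [Complex.real_smul, Complex.ofReal_exp]
  have : Complex.exp t ≠ 0 := Complex.exp_ne_zero t
  field_simp

/-- the Mellin transform is injective on the strong Schwartz space. -/
theorem mellin_injective_on_strongSchwartz (f : ℝ → ℂ) (hf : IsStrongSchwartz f)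
    (hM : ∀ s : ℂ, mellinT f s = 0) :
    ∀ x : ℝ, 0 < x → f x = 0 := by
  open Real FourierTransform in
  show ∀ x : ℝ, 0 < x → f x = 0
  set h : ℝ → ℂ := fun t => f (Real.exp t) * (Real.exp t : ℂ) with hh
  obtain ⟨C₀, hC₀⟩ := hf.2 0 0
  obtain ⟨C₂, hC₂⟩ := hf.2 2 0
  have hb0 : ∀ x : ℝ, 0 < x → ‖f x‖ ≤ C₀ := by
    intro x hx
    have := hC₀ x hx
    simpa [iteratedDerivWithin_zero] using this
  have hb2 : ∀ x : ℝ, 0 < x → x ^ 2 * ‖f x‖ ≤ C₂ := by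
    intro x hx
    have := hC₂ x hx
    simpa [iteratedDerivWithin_zero] using this
  have hfc : ContinuousOn f (Set.Ioi 0) := hf.1.continuousOn
  have hcont : Continuous h := by
    apply Continuous.mul
    · exact hfc.comp_continuous Real.continuous_exp (fun t => Real.exp_pos t)
    · exact Complex.continuous_ofReal.comp Real.continuous_exp
  have hnorm : ∀ t : ℝ, ‖h t‖ = ‖f (Real.exp t)‖ * Real.exp t := by
    intro t
    simp [hh, abs_of_pos (Real.exp_pos t)]
  have hint : Integrable h := by
    have h1 : IntegrableOn h (Set.Iic 0) := by
      apply Integrable.mono' ((integrableOn_exp_Iic 0).const_mul C₀)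
        hcont.aestronglyMeasurable.restrict
      rw [ae_restrict_iff' measurableSet_Iic]
      filter_upwards with t _
      rw [hnorm]
      exact mul_le_mul_of_nonneg_right (hb0 _ (Real.exp_pos t)) (Real.exp_pos t).le
    have h2 : IntegrableOn h (Set.Ioi 0) := by
      apply Integrable.mono' ((exp_neg_integrableOn_Ioi 0 one_pos).const_mul C₂)
        hcont.aestronglyMeasurable.restrict
      rw [ae_restrict_iff' measurableSet_Ioi]
      filter_upwards with t _
      rw [hnorm]
      have he := Real.exp_pos t
      have := hb2 _ he
      have h22 : ‖f (Real.exp t)‖ ≤ C₂ / (Real.exp t) ^ 2 := by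
        rw [le_div_iff₀ (by positivity)]
        linarith [hb2 _ he]
      calc ‖f (Real.exp t)‖ * Real.exp t ≤ (C₂ / (Real.exp t) ^ 2) * Real.exp t :=
            mul_le_mul_of_nonneg_right h22 he.le
        _ = C₂ * Real.exp (-1 * t) := by
            rw [neg_one_mul, Real.exp_neg]
            field_simp
    have := h1.union h2
    rwa [Set.Iic_union_Ioi, integrableOn_univ] at this
  have hF : 𝓕 h = 0 := by
    ext ξ
    rw [Real.fourier_real_eq_integral_exp_smul]
    have : ∀ t : ℝ, Complex.exp (↑(-2 * π * t * ξ) * Complex.I) • h t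
        = f (Real.exp t) * Complex.exp ((1 - 2 * π * ξ * Complex.I) * t) := by
      intro t
      rw [smul_eq_mul, hh]
      simp only [Complex.ofReal_exp]
      rw [mul_comm (Complex.exp _) _, mul_assoc, ← Complex.exp_add]
      congr 2
      push_cast
      ring
    simp_rw [this]
    rw [← mellinT_exp_aux, hM]
    rfl
  have hzero : ∀ t : ℝ, h t = 0 := by
    intro t
    have := hint.fourierInv_fourier_eq (v := t) (by rw [hF]; exact integrable_zero _ _ _)
      hcont.continuousAt
    rw [hF] at this
    rw [← this]
    simp [Real.fourierInv_eq]
  intro x hx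
  have := hzero (Real.log x)
  rw [hh] at this
  simp only [Real.exp_log hx] at this
  have hxne : (x:ℂ) ≠ 0 := by exact_mod_cast hx.ne'
  exact (mul_eq_zero.mp this).resolve_right hxne
end

section
/- If f ∈ 𝐒(ℝ₊ˣ) and h ∈ L¹_loc,poly(ℝ₊ˣ), then for every x > 0 the convolution integral (f ∗ h)(x) = ∫₀^∞ f(x/y) h(y) dy/y converges absolutely, the function f ∗ h is continuous on (0,∞), and there exists a real number a' ≥ 0 such that (f ∗ h)(x) = O(x^{a'}) as x → ∞ and (f ∗ h)(x) = O(x^{−a'}) as x → 0⁺; in particular f ∗ h ∈ L¹_loc,poly(ℝ₊ˣ). -/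
open MeasureTheory Set Filter Asymptotics

/-- A strong Schwartz function decays faster than any power at `0` and `∞`. -/
lemma schwartz_decay (f : ℝ → ℂ) (hf : IsStrongSchwartz f) (b : ℝ) (hb : 0 ≤ b) :
    ∃ C : ℝ, 0 ≤ C ∧ ∀ u : ℝ, 0 < u →
      ‖f u‖ ≤ C * u ^ b ∧ ‖f u‖ ≤ C * u ^ (-b) := by
  obtain ⟨C₀, hC₀⟩ := hf.2 0 0
  obtain ⟨C₁, hC₁⟩ := hf.2 ⌈b⌉ 0
  obtain ⟨C₂, hC₂⟩ := hf.2 (-⌈b⌉) 0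
  simp only [iteratedDerivWithin_zero] at hC₀ hC₁ hC₂
  have hC₀0 : 0 ≤ C₀ := le_trans (norm_nonneg (f 1))
    (by simpa using hC₀ 1 (mem_Ioi.mpr one_pos))
  refine ⟨max C₀ (max C₁ C₂), le_trans hC₀0 (le_max_left _ _), fun u hu => ?_⟩
  set C := max C₀ (max C₁ C₂) with hC
  have hCC₀ : C₀ ≤ C := le_max_left _ _
  have hCC₁ : C₁ ≤ C := le_trans (le_max_left _ _) (le_max_right _ _)
  have hCC₂ : C₂ ≤ C := le_trans (le_max_right _ _) (le_max_right _ _)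
  have hmb : b ≤ (⌈b⌉ : ℝ) := Int.le_ceil b
  have hf0 : ‖f u‖ ≤ C₀ := by simpa using hC₀ u (mem_Ioi.mpr hu)
  rcases le_total 1 u with h1u | hu1
  · constructor
    · calc ‖f u‖ ≤ C₀ := hf0
        _ ≤ C₀ * u ^ b :=
          le_mul_of_one_le_right hC₀0 (Real.one_le_rpow h1u hb)
        _ ≤ C * u ^ b := by
          exact mul_le_mul_of_nonneg_right hCC₀ (Real.rpow_nonneg hu.le _)
    · have h1' := hC₁ u (mem_Ioi.mpr hu)
      have hup : (0:ℝ) < u ^ (⌈b⌉ : ℤ) := zpow_pos hu _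
      have hC₁0 : 0 ≤ C₁ := le_trans (by positivity) h1'
      have h2' : ‖f u‖ ≤ C₁ * (u ^ (⌈b⌉ : ℤ))⁻¹ := by
        rw [← div_eq_mul_inv, le_div_iff₀ hup, mul_comm]
        exact h1'
      have e : (u ^ (⌈b⌉ : ℤ))⁻¹ = u ^ (-(⌈b⌉ : ℝ)) := by
        rw [Real.rpow_neg hu.le, ← Real.rpow_intCast u ⌈b⌉]
      calc ‖f u‖ ≤ C₁ * u ^ (-(⌈b⌉ : ℝ)) := by rw [← e]; exact h2'
        _ ≤ C₁ * u ^ (-b) := by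
          exact mul_le_mul_of_nonneg_left
            (Real.rpow_le_rpow_of_exponent_le h1u (by linarith)) hC₁0
        _ ≤ C * u ^ (-b) :=
          mul_le_mul_of_nonneg_right hCC₁ (Real.rpow_nonneg hu.le _)
  · constructor
    · have h1' := hC₂ u (mem_Ioi.mpr hu)
      have hup : (0:ℝ) < u ^ (-⌈b⌉ : ℤ) := zpow_pos hu _
      have hC₂0 : 0 ≤ C₂ := le_trans (by positivity) h1'
      have h2' : ‖f u‖ ≤ C₂ * (u ^ (-⌈b⌉ : ℤ))⁻¹ := by
        rw [← div_eq_mul_inv, le_div_iff₀ hup, mul_comm]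
        exact h1'
      have e : (u ^ (-⌈b⌉ : ℤ))⁻¹ = u ^ ((⌈b⌉ : ℝ)) := by
        rw [← Real.rpow_intCast u (-⌈b⌉), Int.cast_neg, Real.rpow_neg hu.le,
          inv_inv]
      calc ‖f u‖ ≤ C₂ * u ^ ((⌈b⌉ : ℝ)) := by rw [← e]; exact h2'
        _ ≤ C₂ * u ^ b := by
          exact mul_le_mul_of_nonneg_left
            (Real.rpow_le_rpow_of_exponent_ge hu hu1 hmb) hC₂0
        _ ≤ C * u ^ b :=
          mul_le_mul_of_nonneg_right hCC₂ (Real.rpow_nonneg hu.le _)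
    · calc ‖f u‖ ≤ C₀ := hf0
        _ ≤ C₀ * u ^ (-b) := le_mul_of_one_le_right hC₀0
            (Real.one_le_rpow_of_pos_of_le_one_of_nonpos hu hu1 (by linarith))
        _ ≤ C * u ^ (-b) :=
          mul_le_mul_of_nonneg_right hCC₀ (Real.rpow_nonneg hu.le _)

/-- Extract concrete polynomial bounds near `0` and `∞` from the big-O hypotheses. -/
lemma locpoly_bound (h : ℝ → ℂ) (a : ℝ)
    (hOt : h =O[Filter.atTop] fun x : ℝ => x ^ a)
    (hO0 : h =O[nhdsWithin 0 (Set.Ioi 0)] fun x : ℝ => x ^ (-a)) :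
    ∃ C ε R : ℝ, 0 ≤ C ∧ 0 < ε ∧ ε ≤ 1 ∧ 1 ≤ R ∧
      (∀ y : ℝ, 0 < y → y ≤ ε → ‖h y‖ ≤ C * y ^ (-a)) ∧
      (∀ y : ℝ, R ≤ y → ‖h y‖ ≤ C * y ^ a) := by
  obtain ⟨c₁, hc₁⟩ := hOt.bound
  obtain ⟨R₀, hR₀⟩ := eventually_atTop.mp hc₁
  obtain ⟨c₂, hc₂⟩ := hO0.bound
  rw [eventually_nhdsWithin_iff, Metric.eventually_nhds_iff] at hc₂
  obtain ⟨δ, hδ0, hδ⟩ := hc₂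
  refine ⟨max (max c₁ c₂) 0, min (δ/2) 1, max R₀ 1, le_max_right _ _,
    lt_min (by linarith) one_pos, min_le_right _ _, le_max_right _ _, ?_, ?_⟩
  · intro y hy0 hyε
    have hdist : dist y 0 < δ := by
      rw [Real.dist_eq, sub_zero, abs_of_pos hy0]
      calc y ≤ min (δ/2) 1 := hyε
        _ ≤ δ/2 := min_le_left _ _
        _ < δ := by linarith
    calc ‖h y‖ ≤ c₂ * ‖y ^ (-a)‖ := hδ hdist (mem_Ioi.mpr hy0)
      _ = c₂ * y ^ (-a) := by
          rw [Real.norm_eq_abs, abs_of_nonneg (Real.rpow_nonneg hy0.le _)]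
      _ ≤ max (max c₁ c₂) 0 * y ^ (-a) :=
          mul_le_mul_of_nonneg_right
            (le_max_of_le_left (le_max_right _ _)) (Real.rpow_nonneg hy0.le _)
  · intro y hyR
    have hy0 : 0 < y := lt_of_lt_of_le one_pos (le_trans (le_max_right _ _) hyR)
    calc ‖h y‖ ≤ c₁ * ‖y ^ a‖ := hR₀ y (le_trans (le_max_left _ _) hyR)
      _ = c₁ * y ^ a := by
          rw [Real.norm_eq_abs, abs_of_nonneg (Real.rpow_nonneg hy0.le _)]
      _ ≤ max (max c₁ c₂) 0 * y ^ a :=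
          mul_le_mul_of_nonneg_right
            (le_max_of_le_left (le_max_left _ _)) (Real.rpow_nonneg hy0.le _)

/-- for `f ∈ 𝐒(ℝ₊ˣ)` and `h ∈ L¹_loc,poly(ℝ₊ˣ)`, the convolution integral
converges absolutely at each `x > 0`, `f ∗ h` is continuous on `(0,∞)`, and it satisfies
polynomial bounds at `0` and `∞`; in particular `f ∗ h ∈ L¹_loc,poly(ℝ₊ˣ)`. -/
theorem mulConv_schwartz_locPoly (f h : ℝ → ℂ)
    (hf : IsStrongSchwartz f) (hh : IsLocPoly h) :
    (∀ x : ℝ, 0 < x → MeasureTheory.IntegrableOn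
      (fun y : ℝ => f (x / y) * h y / (y : ℂ)) (Set.Ioi 0)) ∧
    ContinuousOn (mulConv f h) (Set.Ioi 0) ∧
    (∃ a' : ℝ, 0 ≤ a' ∧
      (mulConv f h) =O[Filter.atTop] (fun x : ℝ => x ^ a') ∧
      (mulConv f h) =O[nhdsWithin 0 (Set.Ioi 0)] (fun x : ℝ => x ^ (-a'))) ∧
    IsLocPoly (mulConv f h) := by
  obtain ⟨hfC, hfB⟩ := hf
  obtain ⟨hloc, a, ha0, hOt, hO0⟩ := hh
  set b : ℝ := a + 2 with hbdef
  clear_value b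
  have hb0 : (0:ℝ) ≤ b := by rw [hbdef]; linarith
  obtain ⟨Cf, hCf0, hCf⟩ := schwartz_decay f ⟨hfC, hfB⟩ b hb0
  obtain ⟨Ch, ε, R, hCh0, hε0, hε1, hR1, hhε, hhR⟩ := locpoly_bound h a hOt hO0
  have hR0 : (0:ℝ) < R := lt_of_lt_of_le one_pos hR1
  have hεR : ε ≤ R := le_trans hε1 hR1
  -- norm of the integrand
  have hnorm : ∀ x y : ℝ, 0 < y →
      ‖f (x/y) * h y / (y:ℂ)‖ = ‖f (x/y)‖ * ‖h y‖ / y := by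
    intro x y hy
    rw [norm_div, norm_mul, Complex.norm_real, Real.norm_eq_abs, abs_of_pos hy]
  -- the key pointwise bound
  have hkey : ∀ α β x y : ℝ, 0 < α → α ≤ x → x ≤ β → 0 < y →
      ‖f (x/y) * h y / (y:ℂ)‖ ≤
        Cf * min ((β/y) ^ b) ((y/α) ^ b) / y * ‖h y‖ := by
    intro α β x y hα hαx hxβ hy
    have hx : 0 < x := lt_of_lt_of_le hα hαx
    have hβ : 0 < β := lt_of_lt_of_le hx hxβ
    have hxy : 0 < x/y := div_pos hx hy
    obtain ⟨hf1, hf2⟩ := hCf (x/y) hxy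
    have e1 : ‖f (x/y)‖ ≤ Cf * min ((β/y) ^ b) ((y/α) ^ b) := by
      rcases le_total ((β/y) ^ b) ((y/α) ^ b) with hmn | hmn
      · rw [min_eq_left hmn]
        calc ‖f (x/y)‖ ≤ Cf * (x/y) ^ b := hf1
          _ ≤ Cf * (β/y) ^ b := by
            refine mul_le_mul_of_nonneg_left ?_ hCf0
            exact Real.rpow_le_rpow (div_nonneg hx.le hy.le)
              (div_le_div_of_nonneg_right hxβ hy.le) hb0
      · rw [min_eq_right hmn]
        calc ‖f (x/y)‖ ≤ Cf * (x/y) ^ (-b) := hf2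
          _ = Cf * (y/x) ^ b := by
            rw [Real.rpow_neg hxy.le, ← Real.inv_rpow hxy.le, inv_div]
          _ ≤ Cf * (y/α) ^ b := by
            refine mul_le_mul_of_nonneg_left ?_ hCf0
            exact Real.rpow_le_rpow (div_nonneg hy.le hx.le)
              (div_le_div_of_nonneg_left hy.le hα hαx) hb0
    rw [hnorm x y hy]
    calc ‖f (x/y)‖ * ‖h y‖ / y
        ≤ (Cf * min ((β/y) ^ b) ((y/α) ^ b)) * ‖h y‖ / y := by
          refine div_le_div_of_nonneg_right ?_ hy.le
          exact mul_le_mul_of_nonneg_right e1 (norm_nonneg _)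
      _ = Cf * min ((β/y) ^ b) ((y/α) ^ b) / y * ‖h y‖ := by ring
  -- nonnegativity of the dominating function
  have hGnn : ∀ α β y : ℝ, 0 ≤ α → 0 ≤ β → 0 < y →
      0 ≤ Cf * min ((β/y) ^ b) ((y/α) ^ b) / y * ‖h y‖ := by
    intro α β y hα hβ hy
    refine mul_nonneg (div_nonneg (mul_nonneg hCf0 ?_) hy.le) (norm_nonneg _)
    exact le_min (Real.rpow_nonneg (div_nonneg hβ hy.le) b)
      (Real.rpow_nonneg (div_nonneg hy.le hα) b)
  -- measurability of the integrand
  have hFmeas : ∀ x : ℝ, 0 < x →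
      AEStronglyMeasurable (fun y : ℝ => f (x/y) * h y / (y:ℂ))
        (volume.restrict (Ioi 0)) := by
    intro x hx
    have h1 : ContinuousOn (fun y : ℝ => f (x/y)) (Ioi 0) :=
      hfC.continuousOn.comp
        (continuousOn_const.div continuousOn_id fun y hy => (mem_Ioi.mp hy).ne')
        fun y hy => mem_Ioi.mpr (div_pos hx (mem_Ioi.mp hy))
    have h2 : ContinuousOn (fun y : ℝ => ((y:ℂ))⁻¹) (Ioi 0) :=
      Complex.continuous_ofReal.continuousOn.inv₀
        fun y hy => Complex.ofReal_ne_zero.mpr (mem_Ioi.mp hy).ne'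
    simp only [div_eq_mul_inv]
    exact ((h1.aestronglyMeasurable measurableSet_Ioi).mul
      hloc.aestronglyMeasurable).mul (h2.aestronglyMeasurable measurableSet_Ioi)
  -- measurability of the dominating function
  have hGmeas : ∀ α β : ℝ, 0 < α →
      AEStronglyMeasurable (fun y : ℝ => Cf * min ((β/y) ^ b) ((y/α) ^ b) / y * ‖h y‖)
        (volume.restrict (Ioi 0)) := by
    intro α β hα
    have hc1 : ContinuousOn (fun y : ℝ => (β/y) ^ b) (Ioi 0) :=
      (continuousOn_const.div continuousOn_id
        fun y hy => (mem_Ioi.mp hy).ne').rpow_const fun y _ => Or.inr hb0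
    have hc2 : ContinuousOn (fun y : ℝ => (y/α) ^ b) (Ioi 0) :=
      (continuousOn_id.div continuousOn_const
        fun y _ => hα.ne').rpow_const fun y _ => Or.inr hb0
    have h1 : ContinuousOn (fun y : ℝ => Cf * min ((β/y) ^ b) ((y/α) ^ b) / y)
        (Ioi 0) :=
      (continuousOn_const.mul (hc1.inf hc2)).div continuousOn_id
        fun y hy => (mem_Ioi.mp hy).ne'
    exact (h1.aestronglyMeasurable measurableSet_Ioi).mul
      hloc.aestronglyMeasurable.norm
  -- algebraic identities
  have halg1 : ∀ z y : ℝ, 0 < z → 0 < y →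
      Cf * ((y/z) ^ b) / y * (Ch * y ^ (-a)) = Cf * Ch * (z ^ b)⁻¹ * y := by
    intro z y hz hy
    have e : y ^ b * y ^ (-a) = y * y := by
      rw [← Real.rpow_add hy, show b + -a = (2:ℝ) from by rw [hbdef]; ring,
        show (2:ℝ) = ((2:ℕ):ℝ) from by norm_num, Real.rpow_natCast]
      ring
    rw [Real.div_rpow hy.le hz.le]
    calc Cf * (y ^ b / z ^ b) / y * (Ch * y ^ (-a))
        = Cf * Ch * (z ^ b)⁻¹ * (y ^ b * y ^ (-a) / y) := by ring
      _ = Cf * Ch * (z ^ b)⁻¹ * (y * y / y) := by rw [e]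
      _ = Cf * Ch * (z ^ b)⁻¹ * y := by rw [mul_div_assoc, div_self hy.ne', mul_one]
  have halg2 : ∀ z y : ℝ, 0 < z → 0 < y →
      Cf * ((z/y) ^ b) / y * (Ch * y ^ a) = Cf * Ch * z ^ b * y ^ (-3:ℝ) := by
    intro z y hz hy
    have e1 : y ^ b * y = y ^ (b+1) := by rw [Real.rpow_add hy, Real.rpow_one]
    have e : y ^ a / y ^ b / y = y ^ (-3:ℝ) := by
      rw [div_div, e1, ← Real.rpow_sub hy]
      congr 1
      rw [hbdef]; ring
    rw [Real.div_rpow hz.le hy.le]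
    calc Cf * (z ^ b / y ^ b) / y * (Ch * y ^ a)
        = Cf * Ch * z ^ b * (y ^ a / y ^ b / y) := by ring
      _ = Cf * Ch * z ^ b * y ^ (-3:ℝ) := by rw [e]
  -- integrability of the dominating function
  have hGint : ∀ α β : ℝ, 0 < α → 0 < β →
      IntegrableOn (fun y : ℝ => Cf * min ((β/y) ^ b) ((y/α) ^ b) / y * ‖h y‖)
        (Ioi 0) := by
    intro α β hα hβ
    set T := max R β with hT
    have hRT : R ≤ T := le_max_left _ _
    have hβT : β ≤ T := le_max_right _ _
    have hT1 : (1:ℝ) ≤ T := le_trans hR1 hRT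
    have hT0 : (0:ℝ) < T := lt_of_lt_of_le one_pos hT1
    have hεT : ε ≤ T := le_trans hε1 hT1
    have hmeas := hGmeas α β hα
    have intA : IntegrableOn
        (fun y : ℝ => Cf * min ((β/y) ^ b) ((y/α) ^ b) / y * ‖h y‖) (Ioc 0 ε) := by
      refine Integrable.mono' (g := fun y : ℝ => Cf * Ch * (α ^ b)⁻¹ * y) ?_
        (hmeas.mono_set Ioc_subset_Ioi_self) ?_
      · exact (continuous_const.mul continuous_id).integrableOn_Ioc
      · filter_upwards [ae_restrict_mem measurableSet_Ioc] with y hy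
        obtain ⟨hy0, hyε⟩ := hy
        rw [Real.norm_eq_abs, abs_of_nonneg (hGnn α β y hα.le hβ.le hy0)]
        calc Cf * min ((β/y) ^ b) ((y/α) ^ b) / y * ‖h y‖
            ≤ Cf * ((y/α) ^ b) / y * (Ch * y ^ (-a)) := by
              refine mul_le_mul ?_ (hhε y hy0 hyε) (norm_nonneg _) ?_
              · exact div_le_div_of_nonneg_right
                  (mul_le_mul_of_nonneg_left (min_le_right _ _) hCf0) hy0.le
              · exact div_nonneg (mul_nonneg hCf0
                  (Real.rpow_nonneg (div_nonneg hy0.le hα.le) b)) hy0.le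
          _ = Cf * Ch * (α ^ b)⁻¹ * y := halg1 α y hα hy0
    have intB : IntegrableOn
        (fun y : ℝ => Cf * min ((β/y) ^ b) ((y/α) ^ b) / y * ‖h y‖) (Ioc ε T) := by
      have hInt : IntegrableOn h (Icc ε T) :=
        hloc.integrableOn_compact_subset
          (fun y hy => mem_Ioi.mpr (lt_of_lt_of_le hε0 hy.1)) isCompact_Icc
      have hInt2 : IntegrableOn (fun y : ℝ => ‖h y‖) (Ioc ε T) :=
        MeasureTheory.IntegrableOn.mono_set hInt.norm Ioc_subset_Icc_self
      refine Integrable.mono'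
        (Integrable.const_mul hInt2 (Cf * (β/ε) ^ b / ε))
        (hmeas.mono_set fun y hy => mem_Ioi.mpr (lt_of_lt_of_le hε0 hy.1.le)) ?_
      filter_upwards [ae_restrict_mem measurableSet_Ioc] with y hy
      obtain ⟨hyε, hyT⟩ := hy
      have hy0 : 0 < y := lt_trans hε0 hyε
      rw [Real.norm_eq_abs, abs_of_nonneg (hGnn α β y hα.le hβ.le hy0)]
      refine mul_le_mul ?_ le_rfl (norm_nonneg _) ?_
      · refine div_le_div₀
          (mul_nonneg hCf0 (Real.rpow_nonneg (div_nonneg hβ.le hε0.le) b))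
          ?_ hε0 hyε.le
        refine mul_le_mul_of_nonneg_left (le_trans (min_le_left _ _) ?_) hCf0
        exact Real.rpow_le_rpow (div_nonneg hβ.le hy0.le)
          (div_le_div_of_nonneg_left hβ.le hε0 hyε.le) hb0
      · exact div_nonneg (mul_nonneg hCf0
          (Real.rpow_nonneg (div_nonneg hβ.le hε0.le) b)) hε0.le
    have intC : IntegrableOn
        (fun y : ℝ => Cf * min ((β/y) ^ b) ((y/α) ^ b) / y * ‖h y‖) (Ioi T) := by
      refine Integrable.mono'
        (Integrable.const_mul (integrableOn_Ioi_rpow_of_lt (a := (-3:ℝ)) (by norm_num) hT0)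
          (Cf * Ch * β ^ b))
        (hmeas.mono_set (Ioi_subset_Ioi hT0.le)) ?_
      filter_upwards [ae_restrict_mem measurableSet_Ioi] with y hy
      have hyT : T < y := mem_Ioi.mp hy
      have hy0 : 0 < y := lt_trans hT0 hyT
      have hyR : R ≤ y := le_trans hRT hyT.le
      rw [Real.norm_eq_abs, abs_of_nonneg (hGnn α β y hα.le hβ.le hy0)]
      calc Cf * min ((β/y) ^ b) ((y/α) ^ b) / y * ‖h y‖
          ≤ Cf * ((β/y) ^ b) / y * (Ch * y ^ a) := by
            refine mul_le_mul ?_ (hhR y hyR) (norm_nonneg _) ?_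
            · exact div_le_div_of_nonneg_right
                (mul_le_mul_of_nonneg_left (min_le_left _ _) hCf0) hy0.le
            · exact div_nonneg (mul_nonneg hCf0
                (Real.rpow_nonneg (div_nonneg hβ.le hy0.le) b)) hy0.le
        _ = Cf * Ch * β ^ b * y ^ (-3:ℝ) := halg2 β y hβ hy0
    have hset : Ioi (0:ℝ) = Ioc 0 ε ∪ (Ioc ε T ∪ Ioi T) := by
      rw [Ioc_union_Ioi_eq_Ioi hεT, Ioc_union_Ioi_eq_Ioi hε0.le]
    rw [hset]
    exact intA.union (intB.union intC)
  -- absolute convergence of the convolution integral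
  have hFint : ∀ x : ℝ, 0 < x → IntegrableOn
      (fun y : ℝ => f (x/y) * h y / (y:ℂ)) (Ioi 0) := by
    intro x hx
    exact Integrable.mono' (hGint x x hx hx) (hFmeas x hx)
      ((ae_restrict_mem measurableSet_Ioi).mono
        fun y hy => hkey x x x y hx le_rfl le_rfl (mem_Ioi.mp hy))
  -- continuity
  have hcont : ContinuousOn (mulConv f h) (Ioi 0) := by
    intro x₀ hx₀
    have hx₀' : 0 < x₀ := mem_Ioi.mp hx₀
    have h2 : 0 < x₀/2 := by linarith
    apply ContinuousAt.continuousWithinAt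
    have hmem : Ioo (x₀/2) (2*x₀) ∈ nhds x₀ := Ioo_mem_nhds (by linarith) (by linarith)
    have key : ContinuousAt
        (fun x => ∫ y in Ioi (0:ℝ), f (x/y) * h y / (y:ℂ)) x₀ := by
      apply continuousAt_of_dominated
        (bound := fun y : ℝ => Cf * min ((2*x₀/y) ^ b) ((y/(x₀/2)) ^ b) / y * ‖h y‖)
      · filter_upwards [hmem] with x hx
        exact hFmeas x (lt_trans h2 hx.1)
      · filter_upwards [hmem] with x hx
        filter_upwards [ae_restrict_mem measurableSet_Ioi] with y hy
        exact hkey (x₀/2) (2*x₀) x y h2 hx.1.le hx.2.le (mem_Ioi.mp hy)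
      · exact hGint (x₀/2) (2*x₀) h2 (by linarith)
      · filter_upwards [ae_restrict_mem measurableSet_Ioi] with y hy
        have hy0 : 0 < y := mem_Ioi.mp hy
        have hc : ContinuousAt f (x₀/y) := hfC.continuousOn.continuousAt
          (isOpen_Ioi.mem_nhds (mem_Ioi.mpr (div_pos hx₀' hy0)))
        have hdiv : ContinuousAt (fun x : ℝ => x / y) x₀ :=
          continuousAt_id.div continuousAt_const hy0.ne'
        have hcomp : ContinuousAt (fun x : ℝ => f (x/y)) x₀ :=
          Filter.Tendsto.comp hc hdiv
        exact (hcomp.mul continuousAt_const).div continuousAt_const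
          (Complex.ofReal_ne_zero.mpr hy0.ne')
    exact key
  -- min of reciprocal powers is at most one
  have hmin1 : ∀ x y : ℝ, 0 < x → 0 < y →
      min ((x/y) ^ b) ((y/x) ^ b) ≤ 1 := by
    intro x y hx hy
    rcases le_total x y with hxy | hxy
    · exact le_trans (min_le_left _ _)
        (Real.rpow_le_one (div_nonneg hx.le hy.le) ((div_le_one hy).mpr hxy) hb0)
    · exact le_trans (min_le_right _ _)
        (Real.rpow_le_one (div_nonneg hy.le hx.le) ((div_le_one hx).mpr hxy) hb0)
  set KA := Cf * Ch * ∫ y in Ioc (0:ℝ) ε, y with hKA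
  set KB := ∫ y in Ioc ε R, Cf / ε * ‖h y‖ with hKB
  set KC := Cf * Ch * ∫ y in Ioi R, y ^ (-3:ℝ) with hKC
  have hKA0 : 0 ≤ KA := mul_nonneg (mul_nonneg hCf0 hCh0)
    (setIntegral_nonneg measurableSet_Ioc fun y hy => hy.1.le)
  have hKB0 : 0 ≤ KB := setIntegral_nonneg measurableSet_Ioc
    fun y hy => mul_nonneg (div_nonneg hCf0 hε0.le) (norm_nonneg _)
  have hKC0 : 0 ≤ KC := mul_nonneg (mul_nonneg hCf0 hCh0)
    (setIntegral_nonneg measurableSet_Ioi fun y hy =>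
      Real.rpow_nonneg (lt_trans hR0 (mem_Ioi.mp hy)).le _)
  set K := KA + KB + KC with hK
  have hK0 : 0 ≤ K := add_nonneg (add_nonneg hKA0 hKB0) hKC0
  have hintB' : IntegrableOn (fun y : ℝ => Cf / ε * ‖h y‖) (Ioc ε R) := by
    have hInt : IntegrableOn h (Icc ε R) :=
      hloc.integrableOn_compact_subset
        (fun y hy => mem_Ioi.mpr (lt_of_lt_of_le hε0 hy.1)) isCompact_Icc
    have hInt2 : IntegrableOn (fun y : ℝ => ‖h y‖) (Ioc ε R) :=
      MeasureTheory.IntegrableOn.mono_set hInt.norm Ioc_subset_Icc_self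
    exact Integrable.const_mul hInt2 _
  have hbound : ∀ x : ℝ, 0 < x → ‖mulConv f h x‖ ≤ K * (x ^ b + x ^ (-b)) := by
    intro x hx
    have hGx := hGint x x hx hx
    have hF := hFint x hx
    have step1 : ‖mulConv f h x‖ ≤
        ∫ y in Ioi (0:ℝ), Cf * min ((x/y) ^ b) ((y/x) ^ b) / y * ‖h y‖ := by
      refine le_trans (norm_integral_le_integral_norm _) ?_
      refine integral_mono_ae hF.norm hGx ?_
      exact (ae_restrict_mem measurableSet_Ioi).mono
        fun y hy => hkey x x x y hx le_rfl le_rfl (mem_Ioi.mp hy)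
    have hsub1 : Ioc (0:ℝ) ε ⊆ Ioi 0 := Ioc_subset_Ioi_self
    have hsub2 : Ioc ε R ⊆ Ioi (0:ℝ) := fun y hy => mem_Ioi.mpr (lt_trans hε0 hy.1)
    have hsub3 : Ioi R ⊆ Ioi (0:ℝ) := Ioi_subset_Ioi hR0.le
    have hsplit : ∫ y in Ioi (0:ℝ), Cf * min ((x/y) ^ b) ((y/x) ^ b) / y * ‖h y‖ =
        (∫ y in Ioc (0:ℝ) ε, Cf * min ((x/y) ^ b) ((y/x) ^ b) / y * ‖h y‖) +
        ((∫ y in Ioc ε R, Cf * min ((x/y) ^ b) ((y/x) ^ b) / y * ‖h y‖) +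
         (∫ y in Ioi R, Cf * min ((x/y) ^ b) ((y/x) ^ b) / y * ‖h y‖)) := by
      rw [show Ioi (0:ℝ) = Ioc 0 ε ∪ Ioi ε from (Ioc_union_Ioi_eq_Ioi hε0.le).symm,
        setIntegral_union (Ioc_disjoint_Ioi le_rfl) measurableSet_Ioi
          (hGx.mono_set hsub1) (hGx.mono_set (Ioi_subset_Ioi hε0.le)),
        show Ioi ε = Ioc ε R ∪ Ioi R from (Ioc_union_Ioi_eq_Ioi hεR).symm,
        setIntegral_union (Ioc_disjoint_Ioi le_rfl) measurableSet_Ioi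
          (hGx.mono_set hsub2) (hGx.mono_set hsub3)]
    have estA : (∫ y in Ioc (0:ℝ) ε, Cf * min ((x/y) ^ b) ((y/x) ^ b) / y * ‖h y‖)
        ≤ KA * x ^ (-b) := by
      have step : (∫ y in Ioc (0:ℝ) ε, Cf * min ((x/y) ^ b) ((y/x) ^ b) / y * ‖h y‖)
          ≤ ∫ y in Ioc (0:ℝ) ε, Cf * Ch * (x ^ b)⁻¹ * y := by
        refine setIntegral_mono_on (hGx.mono_set hsub1)
          ((continuous_const.mul continuous_id).integrableOn_Ioc)
          measurableSet_Ioc ?_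
        intro y hy
        obtain ⟨hy0, hyε⟩ := hy
        calc Cf * min ((x/y) ^ b) ((y/x) ^ b) / y * ‖h y‖
            ≤ Cf * ((y/x) ^ b) / y * (Ch * y ^ (-a)) := by
              refine mul_le_mul ?_ (hhε y hy0 hyε) (norm_nonneg _) ?_
              · exact div_le_div_of_nonneg_right
                  (mul_le_mul_of_nonneg_left (min_le_right _ _) hCf0) hy0.le
              · exact div_nonneg (mul_nonneg hCf0
                  (Real.rpow_nonneg (div_nonneg hy0.le hx.le) b)) hy0.le
          _ = Cf * Ch * (x ^ b)⁻¹ * y := halg1 x y hx hy0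
      refine le_trans step ?_
      rw [integral_const_mul, hKA, Real.rpow_neg hx.le]
      exact le_of_eq (by ring)
    have estB : (∫ y in Ioc ε R, Cf * min ((x/y) ^ b) ((y/x) ^ b) / y * ‖h y‖)
        ≤ KB := by
      rw [hKB]
      refine setIntegral_mono_on (hGx.mono_set hsub2) hintB' measurableSet_Ioc ?_
      intro y hy
      obtain ⟨hyε, hyR⟩ := hy
      have hy0 : 0 < y := lt_trans hε0 hyε
      refine mul_le_mul ?_ le_rfl (norm_nonneg _) (div_nonneg hCf0 hε0.le)
      calc Cf * min ((x/y) ^ b) ((y/x) ^ b) / y ≤ Cf * 1 / ε := by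
            refine div_le_div₀ (mul_nonneg hCf0 zero_le_one) ?_ hε0 hyε.le
            exact mul_le_mul_of_nonneg_left (hmin1 x y hx hy0) hCf0
        _ = Cf / ε := by rw [mul_one]
    have estC : (∫ y in Ioi R, Cf * min ((x/y) ^ b) ((y/x) ^ b) / y * ‖h y‖)
        ≤ KC * x ^ b := by
      have step : (∫ y in Ioi R, Cf * min ((x/y) ^ b) ((y/x) ^ b) / y * ‖h y‖)
          ≤ ∫ y in Ioi R, Cf * Ch * x ^ b * y ^ (-3:ℝ) := by
        refine setIntegral_mono_on (hGx.mono_set hsub3)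
          (Integrable.const_mul (integrableOn_Ioi_rpow_of_lt (a := (-3:ℝ)) (by norm_num) hR0) _)
          measurableSet_Ioi ?_
        intro y hy
        have hyR : R < y := mem_Ioi.mp hy
        have hy0 : 0 < y := lt_trans hR0 hyR
        calc Cf * min ((x/y) ^ b) ((y/x) ^ b) / y * ‖h y‖
            ≤ Cf * ((x/y) ^ b) / y * (Ch * y ^ a) := by
              refine mul_le_mul ?_ (hhR y hyR.le) (norm_nonneg _) ?_
              · exact div_le_div_of_nonneg_right
                  (mul_le_mul_of_nonneg_left (min_le_left _ _) hCf0) hy0.le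
              · exact div_nonneg (mul_nonneg hCf0
                  (Real.rpow_nonneg (div_nonneg hx.le hy0.le) b)) hy0.le
          _ = Cf * Ch * x ^ b * y ^ (-3:ℝ) := halg2 x y hx hy0
      refine le_trans step ?_
      rw [integral_const_mul, hKC]
      exact le_of_eq (by ring)
    have hxb0 : 0 ≤ x ^ b := Real.rpow_nonneg hx.le _
    have hxnb0 : 0 ≤ x ^ (-b) := Real.rpow_nonneg hx.le _
    have hone : (1:ℝ) ≤ x ^ b + x ^ (-b) := by
      rcases le_total 1 x with hx1 | hx1
      · linarith [Real.one_le_rpow hx1 hb0]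
      · linarith [Real.one_le_rpow_of_pos_of_le_one_of_nonpos hx hx1
          (neg_nonpos.mpr hb0)]
    calc ‖mulConv f h x‖ ≤ _ := step1
      _ = _ := hsplit
      _ ≤ KA * x ^ (-b) + (KB + KC * x ^ b) :=
          add_le_add estA (add_le_add estB estC)
      _ ≤ K * (x ^ b + x ^ (-b)) := by
          rw [hK]
          nlinarith [mul_nonneg hKA0 hxb0, mul_nonneg hKC0 hxnb0,
            mul_nonneg hKB0 (sub_nonneg.mpr hone)]
  -- big-O statements
  have hOtop : (mulConv f h) =O[Filter.atTop] fun x : ℝ => x ^ b := by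
    rw [isBigO_iff]
    refine ⟨2*K, ?_⟩
    filter_upwards [eventually_ge_atTop (1:ℝ)] with x hx1
    have hx0 : 0 < x := lt_of_lt_of_le one_pos hx1
    have hxb : x ^ (-b) ≤ x ^ b :=
      Real.rpow_le_rpow_of_exponent_le hx1 (by linarith)
    have hn : ‖x ^ b‖ = x ^ b := by
      rw [Real.norm_eq_abs, abs_of_nonneg (Real.rpow_nonneg hx0.le _)]
    rw [hn]
    calc ‖mulConv f h x‖ ≤ K * (x ^ b + x ^ (-b)) := hbound x hx0
      _ ≤ K * (x ^ b + x ^ b) := by nlinarith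
      _ = 2 * K * x ^ b := by ring
  have hO0' : (mulConv f h) =O[nhdsWithin 0 (Set.Ioi 0)] fun x : ℝ => x ^ (-b) := by
    rw [isBigO_iff]
    refine ⟨2*K, ?_⟩
    filter_upwards [Ioo_mem_nhdsGT_of_mem (left_mem_Ico.mpr one_pos)] with x hx
    obtain ⟨hx0, hx1⟩ := hx
    have hxb : x ^ b ≤ x ^ (-b) :=
      Real.rpow_le_rpow_of_exponent_ge hx0 hx1.le (by linarith)
    have hn : ‖x ^ (-b)‖ = x ^ (-b) := by
      rw [Real.norm_eq_abs, abs_of_nonneg (Real.rpow_nonneg hx0.le _)]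
    rw [hn]
    calc ‖mulConv f h x‖ ≤ K * (x ^ b + x ^ (-b)) := hbound x hx0
      _ ≤ K * (x ^ (-b) + x ^ (-b)) := by nlinarith
      _ = 2 * K * x ^ (-b) := by ring
  exact ⟨hFint, hcont, ⟨b, hb0, hOtop, hO0'⟩,
    hcont.locallyIntegrableOn measurableSet_Ioi, b, hb0, hOtop, hO0'⟩
end

section
/- Let f₁, f₂ ∈ 𝐒(ℝ₊ˣ) and h ∈ L¹_loc,poly(ℝ₊ˣ). Then all relevant convolution integrals converge absolutely and f₂ ∗ (f₁ ∗ h) = (f₂ ∗ f₁) ∗ h = f₁ ∗ (f₂ ∗ h) pointwise on (0,∞). -/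
open MeasureTheory Set Filter Asymptotics

namespace MCAssoc

open Real

/-- Rapid decay at `0` and `∞`, plus continuity, on `(0,∞)`. -/
def RapidDecay (f : ℝ → ℂ) : Prop :=
  ContinuousOn f (Set.Ioi 0) ∧
  ∀ b : ℝ, ∃ C : ℝ, 0 ≤ C ∧ ∀ x ∈ Set.Ioi (0:ℝ), ‖f x‖ ≤ C * x ^ b

/-- Concrete form of `L¹_loc,poly` membership. -/
def PolyBound (h : ℝ → ℂ) (a : ℝ) : Prop :=
  0 ≤ a ∧ AEStronglyMeasurable h (volume.restrict (Set.Ioi 0)) ∧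
  ∃ ε R C : ℝ, 0 < ε ∧ ε ≤ 1 ∧ 1 ≤ R ∧ 0 ≤ C ∧
    MeasureTheory.IntegrableOn h (Set.Icc ε R) ∧
    (∀ y ∈ Set.Ioo (0:ℝ) ε, ‖h y‖ ≤ C * y ^ (-a)) ∧
    (∀ y ∈ Set.Ici R, ‖h y‖ ≤ C * y ^ a)

lemma rd_of_ss {f : ℝ → ℂ} (hf : IsStrongSchwartz f) : RapidDecay f := by
  refine ⟨hf.1.continuousOn, fun b => ?_⟩
  have key : ∀ m : ℤ, ∃ C : ℝ, 0 ≤ C ∧ ∀ x ∈ Set.Ioi (0:ℝ), ‖f x‖ ≤ C * x ^ (m:ℝ) := by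
    intro m
    obtain ⟨C, hC⟩ := hf.2 (-m) 0
    refine ⟨max C 0, le_max_right _ _, fun x hx => ?_⟩
    have hx0 : (0:ℝ) < x := hx
    have h1 := hC x hx
    rw [iteratedDerivWithin_zero] at h1
    have hxm : (0:ℝ) < x ^ (-m) := zpow_pos hx0 _
    have h2 : ‖f x‖ ≤ max C 0 / x ^ (-m) := by
      rw [le_div_iff₀ hxm]
      calc ‖f x‖ * x ^ (-m) = x ^ (-m) * ‖f x‖ := mul_comm _ _
        _ ≤ C := h1
        _ ≤ max C 0 := le_max_left _ _
    calc ‖f x‖ ≤ max C 0 / x ^ (-m) := h2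
      _ = max C 0 * x ^ (m:ℝ) := by
          rw [zpow_neg, div_eq_mul_inv, inv_inv, ← Real.rpow_intCast]
  obtain ⟨C₁, hC₁0, hC₁⟩ := key ⌈b⌉
  obtain ⟨C₂, hC₂0, hC₂⟩ := key ⌊b⌋
  refine ⟨max C₁ C₂, le_trans hC₁0 (le_max_left _ _), fun x hx => ?_⟩
  have hx0 : (0:ℝ) < x := hx
  rcases le_total x 1 with h1 | h1
  · calc ‖f x‖ ≤ C₁ * x ^ ((⌈b⌉:ℝ)) := hC₁ x hx
      _ ≤ max C₁ C₂ * x ^ b :=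
        mul_le_mul (le_max_left _ _) (Real.rpow_le_rpow_of_exponent_ge hx0 h1 (Int.le_ceil b))
          (Real.rpow_nonneg hx0.le _) (le_trans hC₁0 (le_max_left _ _))
  · calc ‖f x‖ ≤ C₂ * x ^ ((⌊b⌋:ℝ)) := hC₂ x hx
      _ ≤ max C₁ C₂ * x ^ b :=
        mul_le_mul (le_max_right _ _) (Real.rpow_le_rpow_of_exponent_le h1 (Int.floor_le b))
          (Real.rpow_nonneg hx0.le _) (le_trans hC₂0 (le_max_right _ _))

lemma one_le_rpow_sum {y : ℝ} (c : ℝ) (hy : 0 < y) : 1 ≤ y ^ c + y ^ (-c) := by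
  have hu : 0 < y ^ c := Real.rpow_pos_of_pos hy _
  have hv : 0 < y ^ (-c) := Real.rpow_pos_of_pos hy _
  have huv : y ^ c * y ^ (-c) = 1 := by
    rw [← Real.rpow_add hy]; simp
  nlinarith [sq_nonneg (y ^ c - y ^ (-c))]

lemma pb_of_bound {h : ℝ → ℂ} {a c : ℝ} (ha : 0 ≤ a) (hc : 0 ≤ c)
    (hm : AEStronglyMeasurable h (volume.restrict (Set.Ioi 0)))
    (hb : ∀ y ∈ Set.Ioi (0:ℝ), ‖h y‖ ≤ c * (y ^ a + y ^ (-a))) :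
    PolyBound h a := by
  refine ⟨ha, hm, 1, 1, 2*c, one_pos, le_rfl, le_rfl, by linarith, ?_, ?_, ?_⟩
  · have hz : volume.restrict (Set.Icc (1:ℝ) 1) = 0 := by
      rw [Measure.restrict_eq_zero]; simp
    rw [MeasureTheory.IntegrableOn, hz]
    exact integrable_zero_measure
  · intro y hy
    have hy0 : (0:ℝ) < y := hy.1
    have h1 : y ^ a ≤ y ^ (-a) :=
      Real.rpow_le_rpow_of_exponent_ge hy0 hy.2.le (neg_le_self ha)
    calc ‖h y‖ ≤ c * (y ^ a + y ^ (-a)) := hb y hy0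
      _ ≤ c * (y ^ (-a) + y ^ (-a)) := by nlinarith
      _ = 2 * c * y ^ (-a) := by ring
  · intro y hy
    have hy0 : (0:ℝ) < y := lt_of_lt_of_le one_pos hy
    have h1 : y ^ (-a) ≤ y ^ a :=
      Real.rpow_le_rpow_of_exponent_le hy (by linarith)
    calc ‖h y‖ ≤ c * (y ^ a + y ^ (-a)) := hb y hy0
      _ ≤ c * (y ^ a + y ^ a) := by nlinarith
      _ = 2 * c * y ^ a := by ring

lemma pb_of_locPoly {h : ℝ → ℂ} (hh : IsLocPoly h) : ∃ a, PolyBound h a := by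
  obtain ⟨hloc, a, ha0, hOtop, hO0⟩ := hh
  obtain ⟨C₁, hC₁0, hC₁⟩ := hOtop.exists_nonneg
  obtain ⟨C₂, hC₂0, hC₂⟩ := hO0.exists_nonneg
  obtain ⟨R₀, hR₀⟩ := Filter.eventually_atTop.mp hC₁.bound
  have h0' := hC₂.bound
  rw [eventually_nhdsWithin_iff] at h0'
  obtain ⟨ε₀, hε₀0, hε₀⟩ := Metric.eventually_nhds_iff.mp h0'
  set ε : ℝ := min ε₀ 1 with hεdef
  set R : ℝ := max R₀ 1 with hRdef
  have hε0 : 0 < ε := lt_min hε₀0 one_pos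
  have hε1 : ε ≤ 1 := min_le_right _ _
  have hR1 : (1:ℝ) ≤ R := le_max_right _ _
  refine ⟨a, ha0, hloc.aestronglyMeasurable, ε, R, max C₁ C₂, hε0, hε1, hR1,
    le_trans hC₁0 (le_max_left _ _), ?_, ?_, ?_⟩
  · exact hloc.integrableOn_compact_subset
      (fun y hy => lt_of_lt_of_le hε0 hy.1) isCompact_Icc
  · intro y hy
    have hy0 : 0 < y := hy.1
    have hd : dist y 0 < ε₀ := by
      rw [Real.dist_eq, sub_zero, abs_of_pos hy0]
      exact lt_of_lt_of_le hy.2 (min_le_left _ _)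
    have := hε₀ hd hy0
    calc ‖h y‖ ≤ C₂ * ‖y ^ (-a)‖ := this
      _ = C₂ * y ^ (-a) := by
          rw [Real.norm_eq_abs, abs_of_nonneg (Real.rpow_nonneg hy0.le _)]
      _ ≤ max C₁ C₂ * y ^ (-a) :=
          mul_le_mul_of_nonneg_right (le_max_right _ _) (Real.rpow_nonneg hy0.le _)
  · intro y hy
    have hy0 : 0 < y := lt_of_lt_of_le one_pos (le_trans hR1 hy)
    have := hR₀ y (le_trans (le_max_left _ _) hy)
    calc ‖h y‖ ≤ C₁ * ‖y ^ a‖ := this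
      _ = C₁ * y ^ a := by
          rw [Real.norm_eq_abs, abs_of_nonneg (Real.rpow_nonneg hy0.le _)]
      _ ≤ max C₁ C₂ * y ^ a :=
          mul_le_mul_of_nonneg_right (le_max_left _ _) (Real.rpow_nonneg hy0.le _)

lemma norm_integrand {f h : ℝ → ℂ} {t : ℝ} (ht : 0 < t) (x : ℝ) :
    ‖f (x / t) * h t / (t:ℂ)‖ = ‖f (x / t)‖ * ‖h t‖ / t := by
  rw [norm_div, norm_mul, Complex.norm_real, Real.norm_eq_abs, abs_of_pos ht]

lemma rpow_div_expand {x t : ℝ} (hx : 0 < x) (ht : 0 < t) (c : ℝ) :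
    (x / t) ^ c = x ^ c * t ^ (-c) := by
  rw [Real.div_rpow hx.le ht.le, Real.rpow_neg ht.le, div_eq_mul_inv]

lemma rpow_three_collapse {t : ℝ} (ht : 0 < t) (p q : ℝ) :
    t ^ p * t ^ q / t = t ^ (p + q - 1) := by
  rw [div_eq_mul_inv, ← Real.rpow_neg_one t, ← Real.rpow_add ht, ← Real.rpow_add ht]
  congr 1 <;> ring

lemma bound1 {f h : ℝ → ℂ} {a C₁ C x t : ℝ} (hC₁0 : 0 ≤ C₁) (hC0 : 0 ≤ C)
    (hx : 0 < x) (ht : 0 < t)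
    (hfb : ‖f (x / t)‖ ≤ C₁ * (x / t) ^ (-(a+1))) (hhb : ‖h t‖ ≤ C * t ^ (-a)) :
    ‖f (x / t) * h t / (t:ℂ)‖ ≤ C₁ * C * x ^ (-(a+1)) := by
  rw [norm_integrand ht]
  have key : (C₁ * (x/t) ^ (-(a+1))) * (C * t ^ (-a)) / t = C₁ * C * x ^ (-(a+1)) := by
    rw [rpow_div_expand hx ht, neg_neg]
    have : C₁ * (x ^ (-(a+1)) * t ^ (a+1)) * (C * t ^ (-a)) / t
        = C₁ * C * x ^ (-(a+1)) * (t ^ (a+1) * t ^ (-a) / t) := by ring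
    rw [this, rpow_three_collapse ht, show a + 1 + -a - 1 = 0 by ring, Real.rpow_zero, mul_one]
  calc ‖f (x/t)‖ * ‖h t‖ / t ≤ (C₁ * (x/t) ^ (-(a+1))) * (C * t ^ (-a)) / t := by
        gcongr <;> positivity
    _ = C₁ * C * x ^ (-(a+1)) := key

lemma bound3 {f h : ℝ → ℂ} {a C₂ C x t : ℝ} (hC₂0 : 0 ≤ C₂) (hC0 : 0 ≤ C)
    (hx : 0 < x) (ht : 0 < t)
    (hfb : ‖f (x / t)‖ ≤ C₂ * (x / t) ^ (a+1)) (hhb : ‖h t‖ ≤ C * t ^ a) :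
    ‖f (x / t) * h t / (t:ℂ)‖ ≤ (C₂ * C * x ^ (a+1)) * t ^ (-2:ℝ) := by
  rw [norm_integrand ht]
  have key : (C₂ * (x/t) ^ (a+1)) * (C * t ^ a) / t = (C₂ * C * x ^ (a+1)) * t ^ (-2:ℝ) := by
    rw [rpow_div_expand hx ht]
    have : C₂ * (x ^ (a+1) * t ^ (-(a+1))) * (C * t ^ a) / t
        = C₂ * C * x ^ (a+1) * (t ^ (-(a+1)) * t ^ a / t) := by ring
    rw [this, rpow_three_collapse ht, show -(a + 1) + a - 1 = -2 by ring]
  calc ‖f (x/t)‖ * ‖h t‖ / t ≤ (C₂ * (x/t) ^ (a+1)) * (C * t ^ a) / t := by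
        gcongr <;> positivity
    _ = (C₂ * C * x ^ (a+1)) * t ^ (-2:ℝ) := key

lemma bound2 {f h : ℝ → ℂ} {C₀ ε x t : ℝ} (hC₀0 : 0 ≤ C₀) (hε : 0 < ε) (hεt : ε ≤ t)
    (hfb : ‖f (x / t)‖ ≤ C₀) : ‖f (x / t) * h t / (t:ℂ)‖ ≤ (C₀ / ε) * ‖h t‖ := by
  rw [norm_integrand (lt_of_lt_of_le hε hεt)]
  rw [div_mul_eq_mul_div]
  exact div_le_div₀ (by positivity) (mul_le_mul_of_nonneg_right hfb (norm_nonneg _)) hε hεt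

lemma Ioi_eq_union {ε R : ℝ} (hε : 0 < ε) (hεR : ε ≤ R) :
    Set.Ioi (0:ℝ) = (Set.Ioo 0 ε ∪ Set.Icc ε R) ∪ Set.Ioi R := by
  ext y
  simp only [Set.mem_union, Set.mem_Ioo, Set.mem_Icc, Set.mem_Ioi]
  constructor
  · intro hy
    rcases lt_or_ge y ε with h | h
    · exact Or.inl (Or.inl ⟨hy, h⟩)
    · rcases le_or_gt y R with h2 | h2
      · exact Or.inl (Or.inr ⟨h, h2⟩)
      · exact Or.inr h2
  · rintro ((⟨h1, _⟩ | ⟨h1, _⟩) | h1) <;> linarith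

lemma aesm_integrand (f h : ℝ → ℂ) (hfc : ContinuousOn f (Set.Ioi 0))
    (hhm : AEStronglyMeasurable h (volume.restrict (Set.Ioi 0))) {x : ℝ} (hx : 0 < x) :
    AEStronglyMeasurable (fun y => f (x / y) * h y / (y:ℂ)) (volume.restrict (Set.Ioi 0)) := by
  have h1 : ContinuousOn (fun y : ℝ => f (x / y)) (Set.Ioi 0) := by
    apply hfc.comp (continuousOn_const.div continuousOn_id (fun y hy => ne_of_gt hy))
    intro y hy
    exact div_pos hx hy
  have h2 : ContinuousOn (fun y : ℝ => ((y:ℂ))⁻¹) (Set.Ioi 0) := by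
    apply ContinuousOn.inv₀ (Complex.continuous_ofReal.continuousOn)
    intro y hy
    exact_mod_cast ne_of_gt (show (0:ℝ) < y from hy)
  have := ((h1.aestronglyMeasurable measurableSet_Ioi).mul hhm).mul
    (h2.aestronglyMeasurable measurableSet_Ioi)
  exact this.congr (ae_of_all _ (fun y => by simp [div_eq_mul_inv]))

lemma conv_integrableOn {f h : ℝ → ℂ} {a : ℝ} (hf : RapidDecay f) (hh : PolyBound h a)
    {x : ℝ} (hx : 0 < x) :
    MeasureTheory.IntegrableOn (fun y => f (x / y) * h y / (y:ℂ)) (Set.Ioi 0) := by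
  obtain ⟨ha0, hhm, ε, R, C, hε0, hε1, hR1, hC0, hint, hbd0, hbdR⟩ := hh
  obtain ⟨C₁, hC₁0, hC₁⟩ := hf.2 (-(a+1))
  obtain ⟨C₂, hC₂0, hC₂⟩ := hf.2 (a+1)
  obtain ⟨C₀, hC₀0, hC₀⟩ := hf.2 0
  have hεR : ε ≤ R := hε1.trans hR1
  have hR0 : (0:ℝ) < R := lt_of_lt_of_le one_pos hR1
  have hmeas := aesm_integrand f h hf.1 hhm hx
  have hmono : ∀ s ⊆ Set.Ioi (0:ℝ),
      AEStronglyMeasurable (fun y => f (x / y) * h y / (y:ℂ)) (volume.restrict s) :=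
    fun s hs => hmeas.mono_measure (Measure.restrict_mono hs le_rfl)
  rw [Ioi_eq_union hε0 hεR]
  refine MeasureTheory.IntegrableOn.union (MeasureTheory.IntegrableOn.union ?_ ?_) ?_
  · refine Integrable.mono' (g := fun _ => C₁ * C * x ^ (-(a+1))) ?_
      (hmono _ (fun y hy => hy.1)) ?_
    · refine integrableOn_const (ne_of_lt ?_)
      rw [Real.volume_Ioo]
      exact ENNReal.ofReal_lt_top
    · filter_upwards [ae_restrict_mem measurableSet_Ioo] with y hy
      exact bound1 hC₁0 hC0 hx hy.1 (hC₁ _ (div_pos hx hy.1)) (hbd0 y hy)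
  · refine Integrable.mono' (g := fun y => (C₀ / ε) * ‖h y‖) (hint.norm.const_mul _)
      (hmono _ (fun y hy => lt_of_lt_of_le hε0 hy.1)) ?_
    filter_upwards [ae_restrict_mem measurableSet_Icc] with y hy
    have hy0 : 0 < y := lt_of_lt_of_le hε0 hy.1
    have hfb : ‖f (x / y)‖ ≤ C₀ := by
      have := hC₀ _ (div_pos hx hy0)
      simpa using this
    exact bound2 hC₀0 hε0 hy.1 hfb
  · refine Integrable.mono' (g := fun t => (C₂ * C * x ^ (a+1)) * t ^ (-2:ℝ))
      ((integrableOn_Ioi_rpow_of_lt (by norm_num) hR0).const_mul _)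
      (hmono _ (fun y hy => lt_trans hR0 hy)) ?_
    filter_upwards [ae_restrict_mem measurableSet_Ioi] with y hy
    have hy0 : 0 < y := lt_trans hR0 hy
    exact bound3 hC₂0 hC0 hx hy0 (hC₂ _ (div_pos hx hy0)) (hbdR y (Set.mem_Ici.mpr (le_of_lt (Set.mem_Ioi.mp hy))))

lemma conv_norm_bound {f h : ℝ → ℂ} {a : ℝ} (hf : RapidDecay f) (hh : PolyBound h a) :
    ∃ C', 0 ≤ C' ∧ ∀ y ∈ Set.Ioi (0:ℝ),
      (∫ t in Set.Ioi (0:ℝ), ‖f (y / t) * h t / (t:ℂ)‖) ≤ C' * (y ^ (a+1) + y ^ (-(a+1))) := by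
  obtain ⟨ha0, hhm, ε, R, C, hε0, hε1, hR1, hC0, hint, hbd0, hbdR⟩ := id hh
  obtain ⟨C₁, hC₁0, hC₁⟩ := hf.2 (-(a+1))
  obtain ⟨C₂, hC₂0, hC₂⟩ := hf.2 (a+1)
  obtain ⟨C₀, hC₀0, hC₀⟩ := hf.2 0
  have hεR : ε ≤ R := hε1.trans hR1
  have hR0 : (0:ℝ) < R := lt_of_lt_of_le one_pos hR1
  set J : ℝ := ∫ t in Set.Ioi R, t ^ (-2:ℝ) with hJdef
  have hJ0 : 0 ≤ J := setIntegral_nonneg measurableSet_Ioi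
    (fun t ht => Real.rpow_nonneg (le_of_lt (lt_trans hR0 ht)) _)
  set H : ℝ := ∫ t in Set.Icc ε R, ‖h t‖ with hHdef
  have hH0 : 0 ≤ H := setIntegral_nonneg measurableSet_Icc (fun t _ => norm_nonneg _)
  refine ⟨C₁*C + (C₀/ε)*H + C₂*C*J, by positivity, fun y hy => ?_⟩
  have hy0 : (0:ℝ) < y := hy
  have hI : MeasureTheory.IntegrableOn (fun t => ‖f (y / t) * h t / (t:ℂ)‖) (Set.Ioi 0) :=
    (conv_integrableOn hf hh hy0).norm
  have hsub1 : Set.Ioo (0:ℝ) ε ⊆ Set.Ioi 0 := fun t ht => ht.1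
  have hsub2 : Set.Icc ε R ⊆ Set.Ioi 0 := fun t ht => lt_of_lt_of_le hε0 ht.1
  have hsub3 : Set.Ioi R ⊆ Set.Ioi (0:ℝ) := fun t ht => lt_trans hR0 ht
  have hd1 : Disjoint (Set.Ioo (0:ℝ) ε) (Set.Icc ε R) := by
    rw [Set.disjoint_left]
    rintro t ⟨_, h2⟩ ⟨h3, _⟩
    linarith
  have hd2 : Disjoint (Set.Ioo (0:ℝ) ε ∪ Set.Icc ε R) (Set.Ioi R) := by
    rw [Set.disjoint_left]
    rintro t (⟨_, h2⟩ | ⟨_, h2⟩) h3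
    · rw [Set.mem_Ioi] at h3; linarith
    · rw [Set.mem_Ioi] at h3; linarith
  have split : (∫ t in Set.Ioi (0:ℝ), ‖f (y / t) * h t / (t:ℂ)‖)
      = ((∫ t in Set.Ioo (0:ℝ) ε, ‖f (y / t) * h t / (t:ℂ)‖)
        + (∫ t in Set.Icc ε R, ‖f (y / t) * h t / (t:ℂ)‖))
        + (∫ t in Set.Ioi R, ‖f (y / t) * h t / (t:ℂ)‖) := by
    rw [Ioi_eq_union hε0 hεR, setIntegral_union hd2 measurableSet_Ioi
      ((hI.mono_set hsub1).union (hI.mono_set hsub2)) (hI.mono_set hsub3),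
      setIntegral_union hd1 measurableSet_Icc (hI.mono_set hsub1) (hI.mono_set hsub2)]
  have b1 : (∫ t in Set.Ioo (0:ℝ) ε, ‖f (y / t) * h t / (t:ℂ)‖) ≤ C₁ * C * y ^ (-(a+1)) := by
    have step : (∫ t in Set.Ioo (0:ℝ) ε, ‖f (y / t) * h t / (t:ℂ)‖)
        ≤ ∫ _t in Set.Ioo (0:ℝ) ε, C₁ * C * y ^ (-(a+1)) := by
      refine setIntegral_mono_on (hI.mono_set hsub1) ?_ measurableSet_Ioo ?_
      · refine integrableOn_const (ne_of_lt ?_)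
        rw [Real.volume_Ioo]; exact ENNReal.ofReal_lt_top
      · intro t ht
        exact bound1 hC₁0 hC0 hy0 ht.1 (hC₁ _ (div_pos hy0 ht.1)) (hbd0 t ht)
    refine step.trans ?_
    rw [setIntegral_const, smul_eq_mul, Real.volume_real_Ioo_of_le hε0.le, sub_zero]
    calc ε * (C₁ * C * y ^ (-(a+1))) ≤ 1 * (C₁ * C * y ^ (-(a+1))) := by
          apply mul_le_mul_of_nonneg_right hε1; positivity
      _ = C₁ * C * y ^ (-(a+1)) := one_mul _
  have b2 : (∫ t in Set.Icc ε R, ‖f (y / t) * h t / (t:ℂ)‖) ≤ (C₀/ε) * H := by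
    have step : (∫ t in Set.Icc ε R, ‖f (y / t) * h t / (t:ℂ)‖)
        ≤ ∫ t in Set.Icc ε R, (C₀/ε) * ‖h t‖ := by
      refine setIntegral_mono_on (hI.mono_set hsub2) (hint.norm.const_mul _)
        measurableSet_Icc ?_
      intro t ht
      have ht0 : 0 < t := lt_of_lt_of_le hε0 ht.1
      have hfb : ‖f (y / t)‖ ≤ C₀ := by simpa using hC₀ _ (div_pos hy0 ht0)
      exact bound2 hC₀0 hε0 ht.1 hfb
    refine step.trans (le_of_eq ?_)
    rw [hHdef, integral_const_mul]
  have b3 : (∫ t in Set.Ioi R, ‖f (y / t) * h t / (t:ℂ)‖) ≤ (C₂ * C * y ^ (a+1)) * J := by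
    have step : (∫ t in Set.Ioi R, ‖f (y / t) * h t / (t:ℂ)‖)
        ≤ ∫ t in Set.Ioi R, (C₂ * C * y ^ (a+1)) * t ^ (-2:ℝ) := by
      refine setIntegral_mono_on (hI.mono_set hsub3)
        ((integrableOn_Ioi_rpow_of_lt (by norm_num) hR0).const_mul _) measurableSet_Ioi ?_
      intro t ht
      have ht0 : 0 < t := lt_trans hR0 ht
      exact bound3 hC₂0 hC0 hy0 ht0 (hC₂ _ (div_pos hy0 ht0)) (hbdR t (Set.mem_Ici.mpr (le_of_lt (Set.mem_Ioi.mp ht))))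
    refine step.trans (le_of_eq ?_)
    rw [hJdef, integral_const_mul]
  have hS1 : 1 ≤ y ^ (a+1) + y ^ (-(a+1)) := one_le_rpow_sum _ hy0
  have hp1 : 0 ≤ y ^ (a+1) := Real.rpow_nonneg hy0.le _
  have hp2 : 0 ≤ y ^ (-(a+1)) := Real.rpow_nonneg hy0.le _
  rw [split]
  have e1 : C₁ * C * y ^ (-(a+1)) ≤ C₁ * C * (y ^ (a+1) + y ^ (-(a+1))) :=
    mul_le_mul_of_nonneg_left (le_add_of_nonneg_left hp1) (mul_nonneg hC₁0 hC0)
  have e2 : (C₀/ε) * H ≤ (C₀/ε) * H * (y ^ (a+1) + y ^ (-(a+1))) :=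
    le_mul_of_one_le_right (by positivity) hS1
  have e3 : (C₂ * C * y ^ (a+1)) * J ≤ C₂ * C * J * (y ^ (a+1) + y ^ (-(a+1))) := by
    have h0 : C₂ * C * J * y ^ (a+1) ≤ C₂ * C * J * (y ^ (a+1) + y ^ (-(a+1))) :=
      mul_le_mul_of_nonneg_left (le_add_of_nonneg_right hp2)
        (mul_nonneg (mul_nonneg hC₂0 hC0) hJ0)
    calc (C₂ * C * y ^ (a+1)) * J = C₂ * C * J * y ^ (a+1) := by ring
      _ ≤ _ := h0
  have etot : C₁ * C * (y ^ (a+1) + y ^ (-(a+1))) + (C₀/ε) * H * (y ^ (a+1) + y ^ (-(a+1)))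
      + C₂ * C * J * (y ^ (a+1) + y ^ (-(a+1)))
      = (C₁*C + (C₀/ε)*H + C₂*C*J) * (y ^ (a+1) + y ^ (-(a+1))) := by ring
  linarith [b1, b2, b3, e1, e2, e3, etot]

lemma rd_polyBound {f : ℝ → ℂ} (hf : RapidDecay f) : PolyBound f 0 := by
  obtain ⟨C₀, hC₀0, hC₀⟩ := hf.2 0
  refine pb_of_bound le_rfl hC₀0 (hf.1.aestronglyMeasurable measurableSet_Ioi) ?_
  intro y hy
  have hy0 : (0:ℝ) < y := hy
  have h1 : ‖f y‖ ≤ C₀ := by simpa using hC₀ y hy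
  rw [neg_zero, Real.rpow_zero]
  nlinarith

lemma prod_aesm_inner {f : ℝ → ℂ} (h : ℝ → ℂ) (hfc : ContinuousOn f (Set.Ioi 0))
    (hhm : AEStronglyMeasurable h (volume.restrict (Set.Ioi 0))) :
    AEStronglyMeasurable (fun p : ℝ × ℝ => f (p.1 / p.2) * h p.2 / (p.2:ℂ))
      ((volume.restrict (Set.Ioi 0)).prod (volume.restrict (Set.Ioi 0))) := by
  have hS : MeasurableSet (Set.Ioi (0:ℝ) ×ˢ Set.Ioi (0:ℝ)) :=
    measurableSet_Ioi.prod measurableSet_Ioi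
  have hprod : (volume.restrict (Set.Ioi (0:ℝ))).prod (volume.restrict (Set.Ioi (0:ℝ)))
      = (volume.prod volume).restrict (Set.Ioi (0:ℝ) ×ˢ Set.Ioi (0:ℝ)) :=
    Measure.prod_restrict _ _
  have cB : ContinuousOn (fun p : ℝ × ℝ => f (p.1 / p.2)) (Set.Ioi 0 ×ˢ Set.Ioi 0) := by
    apply hfc.comp (continuousOn_fst.div continuousOn_snd
      (fun p hp => ne_of_gt hp.2))
    intro p hp
    exact div_pos (Set.mem_Ioi.mp hp.1) (Set.mem_Ioi.mp hp.2)
  have cD : ContinuousOn (fun p : ℝ × ℝ => ((p.2:ℝ):ℂ)⁻¹) (Set.Ioi 0 ×ˢ Set.Ioi 0) := by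
    apply ContinuousOn.inv₀
    · exact Continuous.continuousOn (by continuity)
    · intro p hp
      exact_mod_cast ne_of_gt (show (0:ℝ) < p.2 from hp.2)
  have mB : AEStronglyMeasurable (fun p : ℝ × ℝ => f (p.1 / p.2))
      ((volume.restrict (Set.Ioi 0)).prod (volume.restrict (Set.Ioi 0))) := by
    rw [hprod]; exact cB.aestronglyMeasurable hS
  have mD : AEStronglyMeasurable (fun p : ℝ × ℝ => ((p.2:ℝ):ℂ)⁻¹)
      ((volume.restrict (Set.Ioi 0)).prod (volume.restrict (Set.Ioi 0))) := by
    rw [hprod]; exact cD.aestronglyMeasurable hS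
  have mh : AEStronglyMeasurable (fun p : ℝ × ℝ => h p.2)
      ((volume.restrict (Set.Ioi 0)).prod (volume.restrict (Set.Ioi 0))) :=
    hhm.comp_quasiMeasurePreserving Measure.quasiMeasurePreserving_snd
  have := (mB.mul mh).mul mD
  exact this.congr (ae_of_all _ (fun p => by simp [div_eq_mul_inv]))

lemma mulConv_aesm {f h : ℝ → ℂ} (hfc : ContinuousOn f (Set.Ioi 0))
    (hhm : AEStronglyMeasurable h (volume.restrict (Set.Ioi 0))) :
    AEStronglyMeasurable (mulConv f h) (volume.restrict (Set.Ioi 0)) := by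
  have := (prod_aesm_inner h hfc hhm).integral_prod_right'
  exact this

lemma conv_polyBound {f h : ℝ → ℂ} {a : ℝ} (hf : RapidDecay f) (hh : PolyBound h a) :
    PolyBound (mulConv f h) (a+1) := by
  obtain ⟨C', hC'0, hbd⟩ := conv_norm_bound hf hh
  refine pb_of_bound (by linarith [hh.1]) hC'0 (mulConv_aesm hf.1 hh.2.1) ?_
  intro y hy
  exact (norm_integral_le_integral_norm _).trans (hbd y hy)

lemma boundGen {f h : ℝ → ℂ} {Cf Ch x t bf bh : ℝ} (hCf : 0 ≤ Cf) (hCh : 0 ≤ Ch)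
    (hx : 0 < x) (ht : 0 < t)
    (hfb : ‖f (x / t)‖ ≤ Cf * (x / t) ^ bf) (hhb : ‖h t‖ ≤ Ch * t ^ bh) :
    ‖f (x / t) * h t / (t:ℂ)‖ ≤ Cf * Ch * x ^ bf * t ^ (-bf + bh - 1) := by
  rw [norm_integrand ht]
  have key : (Cf * (x/t) ^ bf) * (Ch * t ^ bh) / t = Cf * Ch * x ^ bf * t ^ (-bf + bh - 1) := by
    rw [rpow_div_expand hx ht]
    have : Cf * (x ^ bf * t ^ (-bf)) * (Ch * t ^ bh) / t
        = Cf * Ch * x ^ bf * (t ^ (-bf) * t ^ bh / t) := by ring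
    rw [this, rpow_three_collapse ht]
  calc ‖f (x/t)‖ * ‖h t‖ / t ≤ (Cf * (x/t) ^ bf) * (Ch * t ^ bh) / t := by
        gcongr <;> positivity
    _ = _ := key

lemma rd_div_integrable {f : ℝ → ℂ} (hf : RapidDecay f) :
    MeasureTheory.IntegrableOn (fun t => f t / (t:ℂ)) (Set.Ioi 0) := by
  obtain ⟨C₁, hC₁0, hC₁⟩ := hf.2 1
  obtain ⟨C₂, hC₂0, hC₂⟩ := hf.2 (-1)
  have h2 : ContinuousOn (fun t : ℝ => ((t:ℂ))⁻¹) (Set.Ioi 0) := by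
    apply ContinuousOn.inv₀ (Complex.continuous_ofReal.continuousOn)
    intro y hy
    exact_mod_cast ne_of_gt (show (0:ℝ) < y from hy)
  have hmeas : AEStronglyMeasurable (fun t : ℝ => f t / (t:ℂ))
      (volume.restrict (Set.Ioi 0)) := by
    have h3 : AEStronglyMeasurable (fun t : ℝ => f t * ((t:ℂ))⁻¹)
        (volume.restrict (Set.Ioi 0)) :=
      (hf.1.aestronglyMeasurable measurableSet_Ioi).mul
        (h2.aestronglyMeasurable measurableSet_Ioi)
    simpa [div_eq_mul_inv] using h3
  have hmono : ∀ s ⊆ Set.Ioi (0:ℝ),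
      AEStronglyMeasurable (fun t : ℝ => f t / (t:ℂ)) (volume.restrict s) :=
    fun s hs => hmeas.mono_measure (Measure.restrict_mono hs le_rfl)
  have hnorm : ∀ t : ℝ, 0 < t → ‖f t / (t:ℂ)‖ = ‖f t‖ / t := by
    intro t ht0
    rw [norm_div, Complex.norm_real, Real.norm_eq_abs, abs_of_pos ht0]
  rw [← Ioc_union_Ioi_eq_Ioi (zero_le_one (α := ℝ))]
  refine MeasureTheory.IntegrableOn.union ?_ ?_
  · refine Integrable.mono' (g := fun _ => C₁) ?_ (hmono _ Set.Ioc_subset_Ioi_self) ?_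
    · refine integrableOn_const (ne_of_lt ?_)
      rw [Real.volume_Ioc]
      exact ENNReal.ofReal_lt_top
    · filter_upwards [ae_restrict_mem measurableSet_Ioc] with t ht
      rw [hnorm t ht.1]
      calc ‖f t‖ / t ≤ (C₁ * t ^ (1:ℝ)) / t := by
            apply div_le_div_of_nonneg_right ?_ ht.1.le
            exact hC₁ t ht.1
        _ = C₁ := by
            rw [Real.rpow_one, mul_div_assoc, div_self ht.1.ne', mul_one]
  · refine Integrable.mono' (g := fun t => C₂ * t ^ (-2:ℝ))
      ((integrableOn_Ioi_rpow_of_lt (by norm_num) one_pos).const_mul _)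
      (hmono _ (fun t ht => Set.mem_Ioi.mpr (lt_trans one_pos ht))) ?_
    filter_upwards [ae_restrict_mem measurableSet_Ioi] with t ht
    have ht0 : (0:ℝ) < t := lt_trans one_pos ht
    rw [hnorm t ht0]
    have key : (C₂ * t ^ (-1:ℝ)) / t = C₂ * t ^ (-2:ℝ) := by
      rw [mul_div_assoc]
      congr 1
      rw [div_eq_mul_inv, ← Real.rpow_neg_one t, ← Real.rpow_add ht0]
      norm_num
    calc ‖f t‖ / t ≤ (C₂ * t ^ (-1:ℝ)) / t := by
          apply div_le_div_of_nonneg_right ?_ ht0.le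
          exact hC₂ t ht0
      _ = C₂ * t ^ (-2:ℝ) := key

lemma conv_rd {f₂ f₁ : ℝ → ℂ} (hf₂ : RapidDecay f₂) (hf₁ : RapidDecay f₁) :
    RapidDecay (mulConv f₂ f₁) := by
  obtain ⟨C₀, hC₀0, hC₀⟩ := hf₂.2 0
  constructor
  · intro y₀ hy₀
    have hy₀0 : (0:ℝ) < y₀ := hy₀
    have hcont : ContinuousAt (fun y => ∫ t in Set.Ioi (0:ℝ), f₂ (y / t) * f₁ t / (t:ℂ)) y₀ := by
      apply continuousAt_of_dominated (bound := fun t => C₀ * ‖f₁ t / (t:ℂ)‖)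
      · filter_upwards [IsOpen.mem_nhds isOpen_Ioi hy₀] with y hy
        exact aesm_integrand f₂ f₁ hf₂.1 (hf₁.1.aestronglyMeasurable measurableSet_Ioi) hy
      · filter_upwards [IsOpen.mem_nhds isOpen_Ioi hy₀] with y hy
        filter_upwards [ae_restrict_mem measurableSet_Ioi] with t ht
        have ht0 : (0:ℝ) < t := ht
        have h1 : f₂ (y / t) * f₁ t / (t:ℂ) = f₂ (y / t) * (f₁ t / (t:ℂ)) := by ring
        rw [h1, norm_mul]
        apply mul_le_mul_of_nonneg_right ?_ (norm_nonneg _)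
        simpa using hC₀ _ (div_pos hy ht0)
      · exact (rd_div_integrable hf₁).norm.const_mul _
      · filter_upwards [ae_restrict_mem measurableSet_Ioi] with t ht
        have ht0 : (0:ℝ) < t := ht
        apply ContinuousAt.div_const
        apply ContinuousAt.mul ?_ continuousAt_const
        have hc2 : ContinuousAt f₂ (y₀ / t) :=
          hf₂.1.continuousAt (IsOpen.mem_nhds isOpen_Ioi (div_pos hy₀0 ht0))
        have hdiv : ContinuousAt (fun y : ℝ => y / t) y₀ := continuousAt_id.div_const t
        have hcc : ContinuousAt (f₂ ∘ fun y : ℝ => y / t) y₀ := ContinuousAt.comp (x := y₀) hc2 hdiv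
        exact hcc
    exact hcont.continuousWithinAt
  · intro b
    obtain ⟨Cb, hCb0, hCb⟩ := hf₂.2 b
    obtain ⟨D₁, hD₁0, hD₁⟩ := hf₁.2 (b+1)
    obtain ⟨D₂, hD₂0, hD₂⟩ := hf₁.2 (b-2)
    set J : ℝ := ∫ t in Set.Ioi (1:ℝ), t ^ (-3:ℝ) with hJdef
    have hJ0 : 0 ≤ J := setIntegral_nonneg measurableSet_Ioi
      (fun t ht => Real.rpow_nonneg (le_of_lt (lt_trans one_pos ht)) _)
    refine ⟨Cb*D₁ + Cb*D₂*J, by positivity, fun y hy => ?_⟩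
    have hy0 : (0:ℝ) < y := hy
    have hI : MeasureTheory.IntegrableOn
        (fun t => ‖f₂ (y / t) * f₁ t / (t:ℂ)‖) (Set.Ioi 0) :=
      (conv_integrableOn hf₂ (rd_polyBound hf₁) hy0).norm
    have hsub1 : Set.Ioc (0:ℝ) 1 ⊆ Set.Ioi 0 := Set.Ioc_subset_Ioi_self
    have hsub2 : Set.Ioi (1:ℝ) ⊆ Set.Ioi 0 := fun t ht => Set.mem_Ioi.mpr (lt_trans one_pos ht)
    have hd : Disjoint (Set.Ioc (0:ℝ) 1) (Set.Ioi 1) := by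
      rw [Set.disjoint_left]
      rintro t ⟨_, h2⟩ h3
      rw [Set.mem_Ioi] at h3
      linarith
    have split : ‖mulConv f₂ f₁ y‖ ≤ (∫ t in Set.Ioc (0:ℝ) 1, ‖f₂ (y / t) * f₁ t / (t:ℂ)‖)
        + (∫ t in Set.Ioi (1:ℝ), ‖f₂ (y / t) * f₁ t / (t:ℂ)‖) := by
      calc ‖mulConv f₂ f₁ y‖ ≤ ∫ t in Set.Ioi (0:ℝ), ‖f₂ (y / t) * f₁ t / (t:ℂ)‖ :=
            norm_integral_le_integral_norm _
        _ = _ := by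
            rw [← Ioc_union_Ioi_eq_Ioi (zero_le_one (α := ℝ)),
              setIntegral_union hd measurableSet_Ioi (hI.mono_set hsub1) (hI.mono_set hsub2)]
    have b1 : (∫ t in Set.Ioc (0:ℝ) 1, ‖f₂ (y / t) * f₁ t / (t:ℂ)‖) ≤ Cb * D₁ * y ^ b := by
      have step : (∫ t in Set.Ioc (0:ℝ) 1, ‖f₂ (y / t) * f₁ t / (t:ℂ)‖)
          ≤ ∫ _t in Set.Ioc (0:ℝ) 1, Cb * D₁ * y ^ b := by
        refine setIntegral_mono_on (hI.mono_set hsub1) ?_ measurableSet_Ioc ?_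
        · refine integrableOn_const (ne_of_lt ?_)
          rw [Real.volume_Ioc]
          exact ENNReal.ofReal_lt_top
        · intro t ht
          have := boundGen hCb0 hD₁0 hy0 ht.1 (hCb _ (div_pos hy0 ht.1)) (hD₁ t ht.1)
          rwa [show -b + (b+1) - 1 = 0 by ring, Real.rpow_zero, mul_one] at this
      refine step.trans (le_of_eq ?_)
      rw [setIntegral_const, Real.volume_real_Ioc_of_le zero_le_one, sub_zero,
        one_smul]
    have b3 : (∫ t in Set.Ioi (1:ℝ), ‖f₂ (y / t) * f₁ t / (t:ℂ)‖) ≤ (Cb * D₂ * y ^ b) * J := by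
      have step : (∫ t in Set.Ioi (1:ℝ), ‖f₂ (y / t) * f₁ t / (t:ℂ)‖)
          ≤ ∫ t in Set.Ioi (1:ℝ), (Cb * D₂ * y ^ b) * t ^ (-3:ℝ) := by
        refine setIntegral_mono_on (hI.mono_set hsub2)
          ((integrableOn_Ioi_rpow_of_lt (by norm_num) one_pos).const_mul _)
          measurableSet_Ioi ?_
        intro t ht
        have ht0 : (0:ℝ) < t := lt_trans one_pos ht
        have := boundGen hCb0 hD₂0 hy0 ht0 (hCb _ (div_pos hy0 ht0)) (hD₂ t ht0)
        rwa [show -b + (b-2) - 1 = -3 by ring] at this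
      refine step.trans (le_of_eq ?_)
      rw [hJdef, MeasureTheory.integral_const_mul]
    calc ‖mulConv f₂ f₁ y‖ ≤ (∫ t in Set.Ioc (0:ℝ) 1, ‖f₂ (y / t) * f₁ t / (t:ℂ)‖)
          + (∫ t in Set.Ioi (1:ℝ), ‖f₂ (y / t) * f₁ t / (t:ℂ)‖) := split
      _ ≤ Cb * D₁ * y ^ b + (Cb * D₂ * y ^ b) * J := add_le_add b1 b3
      _ = (Cb*D₁ + Cb*D₂*J) * y ^ b := by ring

lemma mulConv_scale (f₂ f₁ : ℝ → ℂ) {x t : ℝ} (hx : 0 < x) (ht : 0 < t) :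
    (∫ y in Set.Ioi (0:ℝ), f₂ (x / y) * f₁ (y / t) / (y:ℂ)) = mulConv f₂ f₁ (x / t) := by
  have h1 := MeasureTheory.integral_comp_mul_left_Ioi
    (fun y => f₂ (x / y) * f₁ (y / t) / (y:ℂ)) 0 ht
  rw [mul_zero] at h1
  beta_reduce at h1
  have h2 : ∀ u ∈ Set.Ioi (0:ℝ),
      f₂ (x / (t * u)) * f₁ (t * u / t) / ((t * u : ℝ):ℂ)
        = (t:ℂ)⁻¹ * (f₂ ((x / t) / u) * f₁ u / (u:ℂ)) := by
    intro u hu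
    have hu0 : (0:ℝ) < u := hu
    have e1 : x / (t * u) = (x / t) / u := by
      rw [div_div]
    have e2 : t * u / t = u := by
      field_simp
    rw [e1, e2]
    have htC : (t:ℂ) ≠ 0 := by exact_mod_cast ht.ne'
    have huC : (u:ℂ) ≠ 0 := by exact_mod_cast hu0.ne'
    push_cast
    field_simp
  rw [setIntegral_congr_fun measurableSet_Ioi h2, MeasureTheory.integral_const_mul] at h1
  have h3 := congrArg (fun z => (t:ℝ) • z) h1
  simp only [smul_smul, mul_inv_cancel₀ ht.ne', one_smul] at h3
  rw [← h3, Complex.real_smul]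
  have htC : (t:ℂ) ≠ 0 := by exact_mod_cast ht.ne'
  rw [← mul_assoc, mul_inv_cancel₀ htC, one_mul, mulConv]

lemma mulConv_comm_pos (f g : ℝ → ℂ) {u : ℝ} (hu : 0 < u) :
    mulConv f g u = mulConv g f u := by
  have huC : (u:ℂ) ≠ 0 := by exact_mod_cast hu.ne'
  have step1 : mulConv f g u = ∫ x in Set.Ioi (0:ℝ), f (u * x) * g x⁻¹ / (x:ℂ) := by
    rw [mulConv, ← MeasureTheory.integral_comp_rpow_Ioi
      (fun y => f (u / y) * g y / (y:ℂ)) (p := (-1:ℝ)) (by norm_num)]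
    refine setIntegral_congr_fun measurableSet_Ioi (fun x hx => ?_)
    have hx0 : (0:ℝ) < x := hx
    beta_reduce
    rw [Real.rpow_neg_one]
    have e1 : u / x⁻¹ = u * x := by
      field_simp
    rw [e1]
    have e3 : x ^ ((-1:ℝ) - 1) * x = x⁻¹ := by
      have h := Real.rpow_add hx0 (-1-1) 1
      rw [Real.rpow_one] at h
      rw [← h, show ((-1:ℝ) - 1 + 1) = (-1:ℝ) by norm_num, Real.rpow_neg_one]
    rw [show |(-1:ℝ)| = 1 by norm_num, one_mul, Complex.real_smul, Complex.ofReal_inv]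
    rw [div_eq_mul_inv _ ((x:ℂ)⁻¹), inv_inv]
    rw [div_eq_mul_inv, ← Complex.ofReal_inv, ← e3, Complex.ofReal_mul]
    ring
  have step2 : (∫ x in Set.Ioi (0:ℝ), f (u * x) * g x⁻¹ / (x:ℂ)) = mulConv g f u := by
    have h1 := MeasureTheory.integral_comp_mul_left_Ioi
      (fun z => g (u / z) * f z / (z:ℂ)) 0 hu
    rw [mul_zero] at h1
    beta_reduce at h1
    have h2 : ∀ x ∈ Set.Ioi (0:ℝ),
        f (u * x) * g x⁻¹ / (x:ℂ)
          = (u:ℂ) * (g (u / (u * x)) * f (u * x) / ((u * x : ℝ):ℂ)) := by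
      intro x hx
      have hx0 : (0:ℝ) < x := hx
      have e1 : u / (u * x) = x⁻¹ := by
        field_simp
      rw [e1]
      have hxC : (x:ℂ) ≠ 0 := by exact_mod_cast hx0.ne'
      push_cast
      field_simp
    rw [setIntegral_congr_fun measurableSet_Ioi h2, MeasureTheory.integral_const_mul, h1,
      Complex.real_smul, Complex.ofReal_inv]
    rw [← mul_assoc, mul_inv_cancel₀ huC, one_mul, mulConv]
  exact step1.trans step2

lemma assoc_aux {f₂ f₁ h : ℝ → ℂ} {a : ℝ} (hf₂ : RapidDecay f₂) (hf₁ : RapidDecay f₁)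
    (hh : PolyBound h a) {x : ℝ} (hx : 0 < x) :
    mulConv f₂ (mulConv f₁ h) x = mulConv (mulConv f₂ f₁) h x := by
  obtain ⟨C', hC'0, hbd⟩ := conv_norm_bound hf₁ hh
  have ha0 : 0 ≤ a := hh.1
  set F : ℝ → ℝ → ℂ := fun y t => (f₂ (x / y) / (y:ℂ)) * (f₁ (y / t) * h t / (t:ℂ)) with hF
  have hFm : AEStronglyMeasurable (Function.uncurry F)
      ((volume.restrict (Set.Ioi 0)).prod (volume.restrict (Set.Ioi 0))) := by
    have hS : MeasurableSet (Set.Ioi (0:ℝ) ×ˢ Set.Ioi (0:ℝ)) :=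
      measurableSet_Ioi.prod measurableSet_Ioi
    have hprod : (volume.restrict (Set.Ioi (0:ℝ))).prod (volume.restrict (Set.Ioi (0:ℝ)))
        = (volume.prod volume).restrict (Set.Ioi (0:ℝ) ×ˢ Set.Ioi (0:ℝ)) :=
      Measure.prod_restrict _ _
    have cA : ContinuousOn (fun p : ℝ × ℝ => f₂ (x / p.1) / ((p.1:ℝ):ℂ))
        (Set.Ioi 0 ×ˢ Set.Ioi 0) := by
      refine ContinuousOn.div ?_ ?_ ?_
      · apply hf₂.1.comp (continuousOn_const.div continuousOn_fst
          (fun p hp => ne_of_gt hp.1))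
        intro p hp
        exact div_pos hx hp.1
      · exact Continuous.continuousOn (by continuity)
      · intro p hp
        exact_mod_cast ne_of_gt (show (0:ℝ) < p.1 from hp.1)
    have mA : AEStronglyMeasurable (fun p : ℝ × ℝ => f₂ (x / p.1) / ((p.1:ℝ):ℂ))
        ((volume.restrict (Set.Ioi 0)).prod (volume.restrict (Set.Ioi 0))) := by
      rw [hprod]
      exact cA.aestronglyMeasurable hS
    have mI := prod_aesm_inner h hf₁.1 hh.2.1
    exact mA.mul mI
  have hsec : ∀ y ∈ Set.Ioi (0:ℝ), Integrable (F y) (volume.restrict (Set.Ioi 0)) := by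
    intro y hy
    exact (conv_integrableOn hf₁ hh (show (0:ℝ) < y from hy)).const_mul (f₂ (x / y) / (y:ℂ))
  have hGbound : ∀ y ∈ Set.Ioi (0:ℝ),
      (∫ t in Set.Ioi (0:ℝ), ‖F y t‖) ≤ (‖f₂ (x / y)‖ / y) * (C' * (y ^ (a+1) + y ^ (-(a+1)))) := by
    intro y hy
    have hy0 : (0:ℝ) < y := hy
    calc (∫ t in Set.Ioi (0:ℝ), ‖F y t‖)
        = ∫ t in Set.Ioi (0:ℝ), ‖f₂ (x / y) / (y:ℂ)‖ * ‖f₁ (y / t) * h t / (t:ℂ)‖ := by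
          refine setIntegral_congr_fun measurableSet_Ioi (fun t _ => ?_)
          rw [hF]
          exact norm_mul _ _
      _ = ‖f₂ (x / y) / (y:ℂ)‖ * ∫ t in Set.Ioi (0:ℝ), ‖f₁ (y / t) * h t / (t:ℂ)‖ :=
          MeasureTheory.integral_const_mul _ _
      _ ≤ ‖f₂ (x / y) / (y:ℂ)‖ * (C' * (y ^ (a+1) + y ^ (-(a+1)))) :=
          mul_le_mul_of_nonneg_left (hbd y hy) (norm_nonneg _)
      _ = (‖f₂ (x / y)‖ / y) * (C' * (y ^ (a+1) + y ^ (-(a+1)))) := by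
          rw [norm_div, Complex.norm_real, Real.norm_eq_abs, abs_of_pos hy0]
  have hpb : PolyBound (fun y : ℝ => ((C' * (y ^ (a+1) + y ^ (-(a+1))) : ℝ) : ℂ)) (a+1) := by
    apply pb_of_bound (by linarith) hC'0
    · apply ContinuousOn.aestronglyMeasurable ?_ measurableSet_Ioi
      apply Complex.continuous_ofReal.comp_continuousOn
      apply ContinuousOn.mul continuousOn_const
      apply ContinuousOn.add
      · intro y hy
        exact (Real.continuousAt_rpow_const y _
          (Or.inl (ne_of_gt (show (0:ℝ) < y from hy)))).continuousWithinAt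
      · intro y hy
        exact (Real.continuousAt_rpow_const y _
          (Or.inl (ne_of_gt (show (0:ℝ) < y from hy)))).continuousWithinAt
    · intro y hy
      have hy0 : (0:ℝ) < y := hy
      have hnn : 0 ≤ y ^ (a+1) + y ^ (-(a+1)) :=
        add_nonneg (Real.rpow_nonneg hy0.le _) (Real.rpow_nonneg hy0.le _)
      rw [Complex.norm_real, Real.norm_eq_abs, abs_of_nonneg (mul_nonneg hC'0 hnn)]
  have hgint : MeasureTheory.IntegrableOn
      (fun y => (‖f₂ (x / y)‖ / y) * (C' * (y ^ (a+1) + y ^ (-(a+1))))) (Set.Ioi 0) := by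
    have hint := (conv_integrableOn hf₂ hpb hx).norm
    apply hint.congr
    filter_upwards [ae_restrict_mem measurableSet_Ioi] with y hy
    have hy0 : (0:ℝ) < y := hy
    have hnn : 0 ≤ y ^ (a+1) + y ^ (-(a+1)) :=
      add_nonneg (Real.rpow_nonneg hy0.le _) (Real.rpow_nonneg hy0.le _)
    rw [norm_div, norm_mul, Complex.norm_real, Complex.norm_real, Real.norm_eq_abs,
      Real.norm_eq_abs, abs_of_pos hy0, abs_of_nonneg (mul_nonneg hC'0 hnn)]
    ring
  have hintF : Integrable (Function.uncurry F)
      ((volume.restrict (Set.Ioi 0)).prod (volume.restrict (Set.Ioi 0))) := by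
    rw [MeasureTheory.integrable_prod_iff hFm]
    constructor
    · filter_upwards [ae_restrict_mem measurableSet_Ioi] with y hy
      exact hsec y hy
    · apply Integrable.mono' hgint hFm.norm.integral_prod_right'
      filter_upwards [ae_restrict_mem measurableSet_Ioi] with y hy
      rw [Real.norm_eq_abs, abs_of_nonneg (integral_nonneg (fun t => norm_nonneg _))]
      exact hGbound y hy
  have swap := MeasureTheory.integral_integral_swap (f := F) hintF
  calc mulConv f₂ (mulConv f₁ h) x
      = ∫ y in Set.Ioi (0:ℝ), ∫ t in Set.Ioi (0:ℝ), F y t := by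
        rw [mulConv]
        apply integral_congr_ae
        filter_upwards [ae_restrict_mem measurableSet_Ioi] with y hy
        have e : (∫ t in Set.Ioi (0:ℝ), F y t)
            = (f₂ (x / y) / (y:ℂ)) * ∫ t in Set.Ioi (0:ℝ), f₁ (y / t) * h t / (t:ℂ) :=
          MeasureTheory.integral_const_mul _ _
        rw [mulConv, e]
        ring
    _ = ∫ t in Set.Ioi (0:ℝ), ∫ y in Set.Ioi (0:ℝ), F y t := swap
    _ = mulConv (mulConv f₂ f₁) h x := by
        rw [mulConv]
        apply integral_congr_ae
        filter_upwards [ae_restrict_mem measurableSet_Ioi] with t ht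
        have ht0 : (0:ℝ) < t := ht
        calc (∫ y in Set.Ioi (0:ℝ), F y t)
            = ∫ y in Set.Ioi (0:ℝ), (f₂ (x / y) * f₁ (y / t) / (y:ℂ)) * (h t / (t:ℂ)) := by
              refine setIntegral_congr_fun measurableSet_Ioi (fun y _ => ?_)
              rw [hF]
              ring
          _ = (∫ y in Set.Ioi (0:ℝ), f₂ (x / y) * f₁ (y / t) / (y:ℂ)) * (h t / (t:ℂ)) :=
              MeasureTheory.integral_mul_const _ _
          _ = mulConv f₂ f₁ (x / t) * (h t / (t:ℂ)) := by
              rw [mulConv_scale f₂ f₁ hx ht0]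
          _ = mulConv f₂ f₁ (x / t) * h t / (t:ℂ) := by
              ring

end MCAssoc

/-- associativity of multiplicative convolution
`f₂ ∗ (f₁ ∗ h) = (f₂ ∗ f₁) ∗ h = f₁ ∗ (f₂ ∗ h)` on `(0,∞)`, with all relevant
convolution integrals converging absolutely. -/
theorem mulConv_assoc (f₁ f₂ h : ℝ → ℂ)
    (hf₁ : IsStrongSchwartz f₁) (hf₂ : IsStrongSchwartz f₂) (hh : IsLocPoly h) :
    (∀ x : ℝ, 0 < x →
      MeasureTheory.IntegrableOn (fun y : ℝ => f₁ (x / y) * h y / (y : ℂ)) (Set.Ioi 0) ∧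
      MeasureTheory.IntegrableOn (fun y : ℝ => f₂ (x / y) * h y / (y : ℂ)) (Set.Ioi 0) ∧
      MeasureTheory.IntegrableOn (fun y : ℝ => f₂ (x / y) * f₁ y / (y : ℂ)) (Set.Ioi 0) ∧
      MeasureTheory.IntegrableOn
        (fun y : ℝ => f₂ (x / y) * mulConv f₁ h y / (y : ℂ)) (Set.Ioi 0) ∧
      MeasureTheory.IntegrableOn
        (fun y : ℝ => mulConv f₂ f₁ (x / y) * h y / (y : ℂ)) (Set.Ioi 0) ∧
      MeasureTheory.IntegrableOn
        (fun y : ℝ => f₁ (x / y) * mulConv f₂ h y / (y : ℂ)) (Set.Ioi 0)) ∧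
    (∀ x : ℝ, 0 < x →
      mulConv f₂ (mulConv f₁ h) x = mulConv (mulConv f₂ f₁) h x ∧
      mulConv (mulConv f₂ f₁) h x = mulConv f₁ (mulConv f₂ h) x) := by
  obtain ⟨a, hhP⟩ := MCAssoc.pb_of_locPoly hh
  have hf₁R := MCAssoc.rd_of_ss hf₁
  have hf₂R := MCAssoc.rd_of_ss hf₂
  have hf₁P : MCAssoc.PolyBound f₁ 0 := MCAssoc.rd_polyBound hf₁R
  have hf₁hP : MCAssoc.PolyBound (mulConv f₁ h) (a+1) := MCAssoc.conv_polyBound hf₁R hhP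
  have hf₂hP : MCAssoc.PolyBound (mulConv f₂ h) (a+1) := MCAssoc.conv_polyBound hf₂R hhP
  have h21R : MCAssoc.RapidDecay (mulConv f₂ f₁) := MCAssoc.conv_rd hf₂R hf₁R
  constructor
  · intro x hx
    exact ⟨MCAssoc.conv_integrableOn hf₁R hhP hx, MCAssoc.conv_integrableOn hf₂R hhP hx,
      MCAssoc.conv_integrableOn hf₂R hf₁P hx, MCAssoc.conv_integrableOn hf₂R hf₁hP hx,
      MCAssoc.conv_integrableOn h21R hhP hx, MCAssoc.conv_integrableOn hf₁R hf₂hP hx⟩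
  · intro x hx
    have h1 := MCAssoc.assoc_aux hf₂R hf₁R hhP hx
    have h2 := MCAssoc.assoc_aux hf₁R hf₂R hhP hx
    have h3 : mulConv (mulConv f₁ f₂) h x = mulConv (mulConv f₂ f₁) h x := by
      rw [mulConv, mulConv]
      refine setIntegral_congr_fun measurableSet_Ioi (fun y hy => ?_)
      rw [MCAssoc.mulConv_comm_pos f₁ f₂ (div_pos hx (show (0:ℝ) < y from hy))]
    exact ⟨h1, h3.symm.trans h2.symm⟩
end

section
/- Let h ∈ L¹_loc,poly(ℝ₊ˣ) and f ∈ 𝐒(ℝ₊ˣ), and suppose (f ∗ h)(x) = 0 for every x > 0. Then for every N > 0 there exists a constant C > 0 such that |(f ∗ h⁺)(x)| ≤ C · min(x, x⁻¹)^N for all x > 0 (and the same bound holds for f ∗ h⁻). -/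
open MeasureTheory Set Filter Asymptotics

set_option maxHeartbeats 1000000

lemma aux_fbound' (f : ℝ → ℂ) (hf : IsStrongSchwartz f) (m : ℤ) :
    ∃ C : ℝ, 0 < C ∧ ∀ u : ℝ, 0 < u → ‖f u‖ ≤ C * u ^ (-m) := by
  obtain ⟨C, hC⟩ := hf.2 m 0
  refine ⟨max C 1, lt_of_lt_of_le one_pos (le_max_right _ _), fun u hu => ?_⟩
  have h1 := hC u hu
  rw [iteratedDerivWithin_zero] at h1
  have hpow : (0:ℝ) < u ^ m := zpow_pos hu m
  rw [zpow_neg, ← div_eq_mul_inv, le_div_iff₀ hpow, mul_comm]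
  exact h1.trans (le_max_left _ _)

lemma integ_plus (h : ℝ → ℂ) (hloc : LocallyIntegrableOn h (Ioi 0)) (a : ℝ) (ha : 0 ≤ a)
    (hO : h =O[nhdsWithin 0 (Set.Ioi 0)] (fun x : ℝ => x ^ (-a))) (M : ℤ) (hM : a + 1 ≤ (M:ℝ)) :
    IntegrableOn (fun y => y ^ (M - 1 : ℤ) * ‖h y‖) (Ioo 0 1) := by
  rw [isBigO_iff] at hO
  obtain ⟨c, hc⟩ := hO
  rw [eventually_nhdsWithin_iff, Metric.eventually_nhds_iff] at hc
  obtain ⟨ε, hε, hcb⟩ := hc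
  set δ : ℝ := min ε 1 with hδdef
  have hδ0 : 0 < δ := lt_min hε one_pos
  have hδ1 : δ ≤ 1 := min_le_right _ _
  have hmeas : AEStronglyMeasurable (fun y => y ^ (M - 1 : ℤ) * ‖h y‖)
      (volume.restrict (Ioi (0:ℝ))) := by
    have h1 : AEStronglyMeasurable h (volume.restrict (Ioi (0:ℝ))) :=
      hloc.aestronglyMeasurable
    have h2 : Measurable fun y : ℝ => y ^ (M - 1 : ℤ) := by fun_prop
    exact (h2.aestronglyMeasurable).mul h1.norm
  have hsub : Ioo (0:ℝ) 1 ⊆ Ioo 0 δ ∪ Icc δ 1 := by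
    intro y hy
    rcases lt_or_ge y δ with h' | h'
    · exact Or.inl ⟨hy.1, h'⟩
    · exact Or.inr ⟨h', hy.2.le⟩
  refine IntegrableOn.mono_set (IntegrableOn.union ?_ ?_) hsub
  · -- on Ioo 0 δ, bounded by max c 0
    have hbd : ∀ᵐ y ∂(volume.restrict (Ioo (0:ℝ) δ)),
        ‖y ^ (M - 1 : ℤ) * ‖h y‖‖ ≤ max c 0 := by
      rw [ae_restrict_iff' measurableSet_Ioo]
      filter_upwards with y hy
      have hy0 : 0 < y := hy.1
      have hy1 : y < 1 := lt_of_lt_of_le hy.2 hδ1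
      have hyd : dist y 0 < ε := by
        rw [Real.dist_eq, sub_zero, abs_of_pos hy0]
        exact lt_of_lt_of_le hy.2 (min_le_left _ _)
      have hb := hcb hyd hy0
      have h3 : ‖h y‖ ≤ c * y ^ (-a) := by
        have : ‖(y:ℝ) ^ (-a)‖ = y ^ (-a) := by
          rw [Real.norm_eq_abs, abs_of_nonneg (Real.rpow_nonneg hy0.le _)]
        rwa [this] at hb
      have hz : (y:ℝ) ^ (M - 1 : ℤ) = y ^ ((M:ℝ) - 1) := by
        rw [← Real.rpow_intCast y (M-1)]; push_cast; ring_nf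
      have hnn : 0 ≤ (y:ℝ) ^ (M - 1 : ℤ) := by
        rw [hz]; exact Real.rpow_nonneg hy0.le _
      rw [Real.norm_eq_abs, abs_of_nonneg (mul_nonneg hnn (norm_nonneg _))]
      calc y ^ (M - 1 : ℤ) * ‖h y‖ ≤ y ^ (M - 1 : ℤ) * (c * y ^ (-a)) := by
              exact mul_le_mul_of_nonneg_left h3 hnn
        _ = c * (y ^ ((M:ℝ)-1) * y ^ (-a)) := by rw [hz]; ring
        _ = c * y ^ ((M:ℝ) - 1 - a) := by rw [← Real.rpow_add hy0]; ring_nf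
        _ ≤ max c 0 * 1 := by
              apply mul_le_mul (le_max_left _ _) ?_ (Real.rpow_nonneg hy0.le _) (le_max_right _ _)
              exact Real.rpow_le_one hy0.le hy1.le (by linarith)
        _ = max c 0 := mul_one _
    refine Integrable.mono' (integrableOn_const measure_Ioo_lt_top.ne) ?_ hbd
    exact hmeas.mono_measure (Measure.restrict_mono Ioo_subset_Ioi_self le_rfl)
  · -- on Icc δ 1
    have hcpt : IntegrableOn h (Icc δ 1) :=
      hloc.integrableOn_compact_subset (fun y hy => lt_of_lt_of_le hδ0 hy.1) isCompact_Icc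
    refine Integrable.mono hcpt.norm
      (hmeas.mono_measure (Measure.restrict_mono (fun y hy => lt_of_lt_of_le hδ0 hy.1) le_rfl)) ?_
    rw [ae_restrict_iff' measurableSet_Icc]
    filter_upwards with y hy
    have hy0 : 0 < y := lt_of_lt_of_le hδ0 hy.1
    have hz : (y:ℝ) ^ (M - 1 : ℤ) = y ^ ((M:ℝ) - 1) := by
      rw [← Real.rpow_intCast y (M-1)]; push_cast; ring_nf
    have hnn : 0 ≤ (y:ℝ) ^ (M - 1 : ℤ) := by rw [hz]; exact Real.rpow_nonneg hy0.le _
    rw [Real.norm_eq_abs, abs_of_nonneg (mul_nonneg hnn (norm_nonneg _)), norm_norm]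
    calc y ^ (M - 1 : ℤ) * ‖h y‖ ≤ 1 * ‖h y‖ := by
          apply mul_le_mul_of_nonneg_right ?_ (norm_nonneg _)
          rw [hz]; exact Real.rpow_le_one hy0.le hy.2 (by linarith)
      _ = ‖h y‖ := one_mul _

lemma integ_minus (h : ℝ → ℂ) (hloc : LocallyIntegrableOn h (Ioi 0)) (a : ℝ) (ha : 0 ≤ a)
    (hO : h =O[Filter.atTop] (fun x : ℝ => x ^ a)) (M : ℤ) (hM : a + 1 ≤ (M:ℝ)) :
    IntegrableOn (fun y => y ^ (-M - 1 : ℤ) * ‖h y‖) (Ici 1) := by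
  rw [isBigO_iff] at hO
  obtain ⟨c, hc⟩ := hO
  rw [eventually_atTop] at hc
  obtain ⟨R₀, hcb⟩ := hc
  set R : ℝ := max R₀ 1 with hRdef
  have hR1 : (1:ℝ) ≤ R := le_max_right _ _
  have hR0 : (0:ℝ) < R := lt_of_lt_of_le one_pos hR1
  have hmeas : AEStronglyMeasurable (fun y => y ^ (-M - 1 : ℤ) * ‖h y‖)
      (volume.restrict (Ioi (0:ℝ))) := by
    have h1 : AEStronglyMeasurable h (volume.restrict (Ioi (0:ℝ))) :=
      hloc.aestronglyMeasurable
    have h2 : Measurable fun y : ℝ => y ^ (-M - 1 : ℤ) := by fun_prop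
    exact (h2.aestronglyMeasurable).mul h1.norm
  have hsub : Ici (1:ℝ) ⊆ Icc 1 R ∪ Ioi R := by
    intro y hy
    rcases le_or_gt y R with h' | h'
    · exact Or.inl ⟨hy, h'⟩
    · exact Or.inr h'
  refine IntegrableOn.mono_set (IntegrableOn.union ?_ ?_) hsub
  · -- compact part
    have hcpt : IntegrableOn h (Icc 1 R) :=
      hloc.integrableOn_compact_subset (fun y hy => lt_of_lt_of_le one_pos hy.1) isCompact_Icc
    have hsub2 : Icc (1:ℝ) R ⊆ Ioi 0 := fun y hy => lt_of_lt_of_le one_pos hy.1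
    have hmeas2 : AEStronglyMeasurable (fun y => y ^ (-M - 1 : ℤ) * ‖h y‖)
        (volume.restrict (Icc (1:ℝ) R)) :=
      hmeas.mono_measure (Measure.restrict_mono hsub2 le_rfl)
    refine Integrable.mono hcpt.norm hmeas2 ?_
    rw [ae_restrict_iff' measurableSet_Icc]
    filter_upwards with y hy
    have hy0 : 0 < y := lt_of_lt_of_le one_pos hy.1
    have hz : (y:ℝ) ^ (-M - 1 : ℤ) = y ^ (-(M:ℝ) - 1) := by
      rw [← Real.rpow_intCast y (-M-1)]; push_cast; ring_nf
    have hnn : 0 ≤ (y:ℝ) ^ (-M - 1 : ℤ) := by rw [hz]; exact Real.rpow_nonneg hy0.le _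
    rw [Real.norm_eq_abs, abs_of_nonneg (mul_nonneg hnn (norm_nonneg _)), norm_norm]
    calc y ^ (-M - 1 : ℤ) * ‖h y‖ ≤ 1 * ‖h y‖ := by
          apply mul_le_mul_of_nonneg_right ?_ (norm_nonneg _)
          rw [hz]; exact Real.rpow_le_one_of_one_le_of_nonpos hy.1 (by linarith)
      _ = ‖h y‖ := one_mul _
  · -- tail part: bound by (max c 0) * y ^ (a - M - 1)
    have htail : IntegrableOn (fun y : ℝ => max c 0 * y ^ (a - (M:ℝ) - 1)) (Ioi R) := by
      exact (integrableOn_Ioi_rpow_of_lt (by linarith) hR0).const_mul _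
    have hsub3 : Ioi R ⊆ Ioi (0:ℝ) := fun y hy => lt_of_lt_of_le hR0 (le_of_lt hy)
    have hmeas3 : AEStronglyMeasurable (fun y => y ^ (-M - 1 : ℤ) * ‖h y‖)
        (volume.restrict (Ioi R)) :=
      hmeas.mono_measure (Measure.restrict_mono hsub3 le_rfl)
    refine Integrable.mono' htail hmeas3 ?_
    rw [ae_restrict_iff' measurableSet_Ioi]
    filter_upwards with y hy
    have hy0 : 0 < y := lt_of_lt_of_le hR0 hy.le
    have hyR : R₀ ≤ y := le_trans (le_max_left _ _) hy.le
    have hb := hcb y hyR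
    have h3 : ‖h y‖ ≤ c * y ^ a := by
      have : ‖(y:ℝ) ^ a‖ = y ^ a := by
        rw [Real.norm_eq_abs, abs_of_nonneg (Real.rpow_nonneg hy0.le _)]
      rwa [this] at hb
    have hz : (y:ℝ) ^ (-M - 1 : ℤ) = y ^ (-(M:ℝ) - 1) := by
      rw [← Real.rpow_intCast y (-M-1)]; push_cast; ring_nf
    have hnn : 0 ≤ (y:ℝ) ^ (-M - 1 : ℤ) := by rw [hz]; exact Real.rpow_nonneg hy0.le _
    rw [Real.norm_eq_abs, abs_of_nonneg (mul_nonneg hnn (norm_nonneg _))]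
    calc y ^ (-M - 1 : ℤ) * ‖h y‖ ≤ y ^ (-M - 1 : ℤ) * (c * y ^ a) :=
          mul_le_mul_of_nonneg_left h3 hnn
      _ = c * (y ^ (-(M:ℝ) - 1) * y ^ a) := by rw [hz]; ring
      _ = c * y ^ (a - (M:ℝ) - 1) := by rw [← Real.rpow_add hy0]; ring_nf
      _ ≤ max c 0 * y ^ (a - (M:ℝ) - 1) :=
          mul_le_mul_of_nonneg_right (le_max_left _ _) (Real.rpow_nonneg hy0.le _)

lemma conv_plus_bound (f h : ℝ → ℂ) (hfc : ContinuousOn f (Ioi 0))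
    (hmh : AEStronglyMeasurable h (volume.restrict (Ioi (0:ℝ))))
    (M : ℤ) (Cf : ℝ) (hCf : 0 ≤ Cf) (hfb : ∀ u : ℝ, 0 < u → ‖f u‖ ≤ Cf * u ^ (-M))
    (hint : IntegrableOn (fun y => y ^ (M - 1 : ℤ) * ‖h y‖) (Ioo 0 1))
    (x : ℝ) (hx : 0 < x) :
    IntegrableOn (fun y => f (x/y) * hPlus h y / (y:ℂ)) (Ioi 0) ∧
    ‖mulConv f (hPlus h) x‖ ≤
      (Cf * ∫ y in Ioo (0:ℝ) 1, y ^ (M - 1 : ℤ) * ‖h y‖) * x ^ (-M : ℤ) := by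
  set F : ℝ → ℂ := fun y => f (x/y) * hPlus h y / (y:ℂ) with hF
  -- measurability
  have hdivc : ContinuousOn (fun y : ℝ => f (x / y)) (Ioi 0) := by
    apply hfc.comp (continuousOn_const.div continuousOn_id (fun y hy => ne_of_gt hy))
    intro y hy
    exact div_pos hx hy
  have hmF : AEStronglyMeasurable F (volume.restrict (Ioi (0:ℝ))) := by
    have h1 : AEStronglyMeasurable (fun y : ℝ => f (x / y)) (volume.restrict (Ioi (0:ℝ))) :=
      hdivc.aestronglyMeasurable measurableSet_Ioi
    have h2 : AEStronglyMeasurable (hPlus h) (volume.restrict (Ioi (0:ℝ))) := by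
      have : hPlus h = (Iio (1:ℝ)).indicator h := by
        funext y; simp [hPlus, Set.indicator, Set.mem_Iio]
      rw [this]
      exact hmh.indicator measurableSet_Iio
    have h3 : AEStronglyMeasurable (fun y : ℝ => ((y:ℂ))⁻¹) (volume.restrict (Ioi (0:ℝ))) :=
      (Complex.measurable_ofReal.inv).aestronglyMeasurable
    have := (h1.mul h2).mul h3
    simpa only [hF, div_eq_mul_inv, Pi.mul_def] using this
  -- vanishing on Ici 1
  have hzero : ∀ y ∈ Ici (1:ℝ), F y = 0 := by
    intro y hy
    have : hPlus h y = 0 := by simp [hPlus, not_lt.mpr (show (1:ℝ) ≤ y from hy)]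
    simp [hF, this]
  -- pointwise bound on Ioo 0 1
  have hbd : ∀ y ∈ Ioo (0:ℝ) 1, ‖F y‖ ≤ Cf * x ^ (-M : ℤ) * (y ^ (M - 1 : ℤ) * ‖h y‖) := by
    intro y hy
    have hy0 : 0 < y := hy.1
    have hxy : 0 < x / y := div_pos hx hy0
    have hfv := hfb _ hxy
    have hP : hPlus h y = h y := by simp [hPlus, hy.2]
    have hnc : ‖(y:ℂ)‖ = y := by
      rw [Complex.norm_real, Real.norm_eq_abs, abs_of_pos hy0]
    have h1 : ‖F y‖ = ‖f (x/y)‖ * ‖h y‖ / y := by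
      rw [hF]; simp only [norm_div, norm_mul, hP, hnc]
    rw [h1]
    have hdz : (x / y) ^ (-M : ℤ) = x ^ (-M : ℤ) * y ^ (M : ℤ) := by
      rw [div_zpow, zpow_neg, zpow_neg, div_eq_mul_inv, inv_inv]
    have h2 : ‖f (x/y)‖ ≤ Cf * x ^ (-M : ℤ) * y ^ (M : ℤ) := by
      rw [hdz, ← mul_assoc] at hfv; exact hfv
    calc ‖f (x/y)‖ * ‖h y‖ / y ≤ (Cf * x ^ (-M : ℤ) * y ^ (M : ℤ)) * ‖h y‖ / y :=
          div_le_div_of_nonneg_right (mul_le_mul_of_nonneg_right h2 (norm_nonneg _)) hy0.le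
      _ = Cf * x ^ (-M : ℤ) * (y ^ (M - 1 : ℤ) * ‖h y‖) := by
          rw [zpow_sub_one₀ (ne_of_gt hy0)]
          field_simp
  -- integrability on pieces
  have hmFoo : AEStronglyMeasurable F (volume.restrict (Ioo (0:ℝ) 1)) :=
    hmF.mono_measure (Measure.restrict_mono Ioo_subset_Ioi_self le_rfl)
  have hIoo : IntegrableOn F (Ioo 0 1) := by
    refine Integrable.mono' (hint.const_mul (Cf * x ^ (-M:ℤ))) hmFoo ?_
    rw [ae_restrict_iff' measurableSet_Ioo]
    filter_upwards with y hy
    exact hbd y hy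
  have hzero' : EqOn F (fun _ => (0:ℂ)) (Ici 1) := hzero
  have hIci : IntegrableOn F (Ici 1) := by
    rw [integrableOn_congr_fun hzero' measurableSet_Ici]
    exact integrableOn_zero
  have hunion : IntegrableOn F (Ioi 0) := by
    rw [← Ioo_union_Ici_eq_Ioi (zero_lt_one (α := ℝ))]
    exact hIoo.union hIci
  refine ⟨hunion, ?_⟩
  have hdisj : Disjoint (Ioo (0:ℝ) 1) (Ici 1) := by
    rw [Set.disjoint_left]; intro y hy h1; exact absurd hy.2 (not_lt.mpr h1)
  have hsplit : mulConv f (hPlus h) x = (∫ y in Ioo (0:ℝ) 1, F y) + ∫ y in Ici (1:ℝ), F y := by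
    rw [show mulConv f (hPlus h) x = ∫ y in Ioi (0:ℝ), F y from rfl,
      ← Ioo_union_Ici_eq_Ioi (zero_lt_one (α := ℝ))]
    exact setIntegral_union hdisj measurableSet_Ici hIoo hIci
  have hzint : (∫ y in Ici (1:ℝ), F y) = 0 := by
    rw [setIntegral_congr_fun measurableSet_Ici hzero']
    simp
  rw [hsplit, hzint, add_zero]
  have hmaj : ‖∫ y in Ioo (0:ℝ) 1, F y‖
      ≤ ∫ y in Ioo (0:ℝ) 1, Cf * x ^ (-M:ℤ) * (y ^ (M-1:ℤ) * ‖h y‖) := by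
    apply norm_integral_le_of_norm_le (hint.const_mul _)
    rw [ae_restrict_iff' measurableSet_Ioo]
    filter_upwards with y hy
    exact hbd y hy
  calc ‖∫ y in Ioo (0:ℝ) 1, F y‖
      ≤ ∫ y in Ioo (0:ℝ) 1, Cf * x ^ (-M:ℤ) * (y ^ (M-1:ℤ) * ‖h y‖) := hmaj
    _ = Cf * x ^ (-M:ℤ) * ∫ y in Ioo (0:ℝ) 1, y ^ (M-1:ℤ) * ‖h y‖ := by
        rw [MeasureTheory.integral_const_mul]
    _ = (Cf * ∫ y in Ioo (0:ℝ) 1, y ^ (M - 1 : ℤ) * ‖h y‖) * x ^ (-M : ℤ) := by ring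

lemma conv_minus_bound (f h : ℝ → ℂ) (hfc : ContinuousOn f (Ioi 0))
    (hmh : AEStronglyMeasurable h (volume.restrict (Ioi (0:ℝ))))
    (M : ℤ) (Cf : ℝ) (hfb : ∀ u : ℝ, 0 < u → ‖f u‖ ≤ Cf * u ^ (M:ℤ))
    (hint : IntegrableOn (fun y => y ^ (-M - 1 : ℤ) * ‖h y‖) (Ici 1))
    (x : ℝ) (hx : 0 < x) :
    IntegrableOn (fun y => f (x/y) * hMinus h y / (y:ℂ)) (Ioi 0) ∧
    ‖mulConv f (hMinus h) x‖ ≤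
      (Cf * ∫ y in Ici (1:ℝ), y ^ (-M - 1 : ℤ) * ‖h y‖) * x ^ (M : ℤ) := by
  set F : ℝ → ℂ := fun y => f (x/y) * hMinus h y / (y:ℂ) with hF
  have hdivc : ContinuousOn (fun y : ℝ => f (x / y)) (Ioi 0) := by
    apply hfc.comp (continuousOn_const.div continuousOn_id (fun y hy => ne_of_gt hy))
    intro y hy
    exact div_pos hx hy
  have hmF : AEStronglyMeasurable F (volume.restrict (Ioi (0:ℝ))) := by
    have h1 : AEStronglyMeasurable (fun y : ℝ => f (x / y)) (volume.restrict (Ioi (0:ℝ))) :=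
      hdivc.aestronglyMeasurable measurableSet_Ioi
    have h2 : AEStronglyMeasurable (hMinus h) (volume.restrict (Ioi (0:ℝ))) := by
      have : hMinus h = (Ici (1:ℝ)).indicator h := by
        funext y; simp [hMinus, Set.indicator, Set.mem_Ici]
      rw [this]
      exact hmh.indicator measurableSet_Ici
    have h3 : AEStronglyMeasurable (fun y : ℝ => ((y:ℂ))⁻¹) (volume.restrict (Ioi (0:ℝ))) :=
      (Complex.measurable_ofReal.inv).aestronglyMeasurable
    have := (h1.mul h2).mul h3
    simpa only [hF, div_eq_mul_inv, Pi.mul_def] using this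
  have hzero : ∀ y ∈ Ioo (0:ℝ) 1, F y = 0 := by
    intro y hy
    have : hMinus h y = 0 := by simp [hMinus, not_le.mpr hy.2]
    simp [hF, this]
  have hbd : ∀ y ∈ Ici (1:ℝ), ‖F y‖ ≤ Cf * x ^ (M : ℤ) * (y ^ (-M - 1 : ℤ) * ‖h y‖) := by
    intro y hy
    have hy0 : (0:ℝ) < y := lt_of_lt_of_le one_pos hy
    have hxy : 0 < x / y := div_pos hx hy0
    have hfv := hfb _ hxy
    have hP : hMinus h y = h y := by unfold hMinus; rw [if_pos (show (1:ℝ) ≤ y from hy)]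
    have hnc : ‖(y:ℂ)‖ = y := by
      rw [Complex.norm_real, Real.norm_eq_abs, abs_of_pos hy0]
    have h1 : ‖F y‖ = ‖f (x/y)‖ * ‖h y‖ / y := by
      rw [hF]; simp only [norm_div, norm_mul, hP, hnc]
    rw [h1]
    have hdz : (x / y) ^ (M : ℤ) = x ^ (M : ℤ) * y ^ (-M : ℤ) := by
      rw [div_zpow, zpow_neg, div_eq_mul_inv]
    have h2 : ‖f (x/y)‖ ≤ Cf * x ^ (M : ℤ) * y ^ (-M : ℤ) := by
      rw [hdz, ← mul_assoc] at hfv; exact hfv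
    calc ‖f (x/y)‖ * ‖h y‖ / y ≤ (Cf * x ^ (M : ℤ) * y ^ (-M : ℤ)) * ‖h y‖ / y :=
          div_le_div_of_nonneg_right (mul_le_mul_of_nonneg_right h2 (norm_nonneg _)) hy0.le
      _ = Cf * x ^ (M : ℤ) * (y ^ (-M - 1 : ℤ) * ‖h y‖) := by
          rw [zpow_sub_one₀ (ne_of_gt hy0)]
          field_simp
  have hsubI : Ici (1:ℝ) ⊆ Ioi 0 := fun y hy => show (0:ℝ) < y from lt_of_lt_of_le one_pos hy
  have hmFic : AEStronglyMeasurable F (volume.restrict (Ici (1:ℝ))) :=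
    hmF.mono_measure (Measure.restrict_mono hsubI le_rfl)
  have hIci : IntegrableOn F (Ici 1) := by
    refine Integrable.mono' (hint.const_mul (Cf * x ^ (M:ℤ))) hmFic ?_
    rw [ae_restrict_iff' measurableSet_Ici]
    filter_upwards with y hy
    exact hbd y hy
  have hzero' : EqOn F (fun _ => (0:ℂ)) (Ioo 0 1) := hzero
  have hIoo : IntegrableOn F (Ioo 0 1) := by
    rw [integrableOn_congr_fun hzero' measurableSet_Ioo]
    exact integrableOn_zero
  have hunion : IntegrableOn F (Ioi 0) := by
    rw [← Ioo_union_Ici_eq_Ioi (zero_lt_one (α := ℝ))]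
    exact hIoo.union hIci
  refine ⟨hunion, ?_⟩
  have hdisj : Disjoint (Ioo (0:ℝ) 1) (Ici 1) := by
    rw [Set.disjoint_left]; intro y hy h1; exact absurd hy.2 (not_lt.mpr h1)
  have hsplit : mulConv f (hMinus h) x = (∫ y in Ioo (0:ℝ) 1, F y) + ∫ y in Ici (1:ℝ), F y := by
    rw [show mulConv f (hMinus h) x = ∫ y in Ioi (0:ℝ), F y from rfl,
      ← Ioo_union_Ici_eq_Ioi (zero_lt_one (α := ℝ))]
    exact setIntegral_union hdisj measurableSet_Ici hIoo hIci
  have hzint : (∫ y in Ioo (0:ℝ) 1, F y) = 0 := by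
    rw [setIntegral_congr_fun measurableSet_Ioo hzero']
    simp
  rw [hsplit, hzint, zero_add]
  have hmaj : ‖∫ y in Ici (1:ℝ), F y‖
      ≤ ∫ y in Ici (1:ℝ), Cf * x ^ (M:ℤ) * (y ^ (-M - 1:ℤ) * ‖h y‖) := by
    apply norm_integral_le_of_norm_le (hint.const_mul _)
    rw [ae_restrict_iff' measurableSet_Ici]
    filter_upwards with y hy
    exact hbd y hy
  calc ‖∫ y in Ici (1:ℝ), F y‖
      ≤ ∫ y in Ici (1:ℝ), Cf * x ^ (M:ℤ) * (y ^ (-M - 1:ℤ) * ‖h y‖) := hmaj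
    _ = Cf * x ^ (M:ℤ) * ∫ y in Ici (1:ℝ), y ^ (-M - 1:ℤ) * ‖h y‖ := by
        rw [MeasureTheory.integral_const_mul]
    _ = (Cf * ∫ y in Ici (1:ℝ), y ^ (-M - 1 : ℤ) * ‖h y‖) * x ^ (M : ℤ) := by ring

/-- if `f ∗ h ≡ 0` on `(0,∞)` then `f ∗ h⁺` (and `f ∗ h⁻`) decay rapidly:
for every `N > 0` there is `C > 0` with `|(f ∗ h⁺)(x)| ≤ C · min(x, x⁻¹)^N`. -/
theorem mulConv_plus_rapid_decay (f h : ℝ → ℂ)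
    (hf : IsStrongSchwartz f) (hh : IsLocPoly h)
    (hconv : ∀ x : ℝ, 0 < x → mulConv f h x = 0) :
    ∀ N : ℝ, 0 < N → ∃ C : ℝ, 0 < C ∧
      (∀ x : ℝ, 0 < x → ‖mulConv f (hPlus h) x‖ ≤ C * (min x x⁻¹) ^ N) ∧
      (∀ x : ℝ, 0 < x → ‖mulConv f (hMinus h) x‖ ≤ C * (min x x⁻¹) ^ N) := by
  obtain ⟨hloc, a, ha0, hOtop, hO0⟩ := hh
  intro N hN
  set M : ℤ := ⌈max N (a+1)⌉ with hMdef
  have hMge : max N (a+1) ≤ (M:ℝ) := Int.le_ceil _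
  have hMN : N ≤ (M:ℝ) := le_trans (le_max_left _ _) hMge
  have hMa : a + 1 ≤ (M:ℝ) := le_trans (le_max_right _ _) hMge
  obtain ⟨Cf₁, hCf₁, hfb₁⟩ := aux_fbound' f hf M
  obtain ⟨Cf₂, hCf₂, hfb₂'⟩ := aux_fbound' f hf (-M)
  have hfb₂ : ∀ u : ℝ, 0 < u → ‖f u‖ ≤ Cf₂ * u ^ (M:ℤ) := by
    intro u hu; have := hfb₂' u hu; rwa [neg_neg] at this
  have hintp := integ_plus h hloc a ha0 hO0 M hMa
  have hintm := integ_minus h hloc a ha0 hOtop M hMa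
  have hfc : ContinuousOn f (Ioi 0) := hf.1.continuousOn
  have hmh : AEStronglyMeasurable h (volume.restrict (Ioi (0:ℝ))) :=
    hloc.aestronglyMeasurable
  set Ip : ℝ := ∫ y in Ioo (0:ℝ) 1, y ^ (M - 1 : ℤ) * ‖h y‖ with hIp
  set Im : ℝ := ∫ y in Ici (1:ℝ), y ^ (-M - 1 : ℤ) * ‖h y‖ with hIm
  have hIp0 : 0 ≤ Ip := by
    apply setIntegral_nonneg measurableSet_Ioo
    intro y hy
    exact mul_nonneg (le_of_lt (zpow_pos hy.1 _)) (norm_nonneg _)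
  have hIm0 : 0 ≤ Im := by
    apply setIntegral_nonneg measurableSet_Ici
    intro y hy
    exact mul_nonneg (le_of_lt (zpow_pos (lt_of_lt_of_le one_pos hy) _)) (norm_nonneg _)
  set Kp : ℝ := Cf₁ * Ip with hKp
  set Km : ℝ := Cf₂ * Im with hKm
  have hKp0 : 0 ≤ Kp := mul_nonneg hCf₁.le hIp0
  have hKm0 : 0 ≤ Km := mul_nonneg hCf₂.le hIm0
  set C : ℝ := max Kp Km + 1 with hC
  have hC0 : 0 < C := by positivity
  have hKpC : Kp ≤ C := le_trans (le_max_left _ _) (by linarith)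
  have hKmC : Km ≤ C := le_trans (le_max_right _ _) (by linarith)
  -- the two one-sided bounds and the equality of norms
  have key : ∀ x : ℝ, 0 < x →
      ‖mulConv f (hPlus h) x‖ = ‖mulConv f (hMinus h) x‖ ∧
      ‖mulConv f (hPlus h) x‖ ≤ Kp * x ^ (-M : ℤ) ∧
      ‖mulConv f (hMinus h) x‖ ≤ Km * x ^ (M : ℤ) := by
    intro x hx
    obtain ⟨hip, hbp⟩ := conv_plus_bound f h hfc hmh M Cf₁ hCf₁.le hfb₁ hintp x hx
    obtain ⟨him, hbm⟩ := conv_minus_bound f h hfc hmh M Cf₂ hfb₂ hintm x hx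
    refine ⟨?_, hbp, hbm⟩
    have hpm : ∀ y : ℝ, hPlus h y + hMinus h y = h y := by
      intro y
      unfold hPlus hMinus
      by_cases hy : y < 1
      · rw [if_pos hy, if_neg (not_le.mpr hy), add_zero]
      · rw [if_neg hy, if_pos (not_lt.mp hy), zero_add]
    have heq : (fun y : ℝ => f (x/y) * h y / (y:ℂ)) =
        fun y : ℝ => f (x/y) * hPlus h y / (y:ℂ) + f (x/y) * hMinus h y / (y:ℂ) := by
      funext y
      rw [← hpm y]
      push_cast
      ring
    have hsum : mulConv f h x = mulConv f (hPlus h) x + mulConv f (hMinus h) x := by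
      rw [show mulConv f h x = ∫ y in Ioi (0:ℝ), f (x/y) * h y / (y:ℂ) from rfl, heq]
      exact integral_add hip him
    have h0 := hconv x hx
    rw [h0] at hsum
    have : mulConv f (hPlus h) x = - mulConv f (hMinus h) x := by linear_combination -hsum
    rw [this, norm_neg]
  refine ⟨C, hC0, ?_, ?_⟩ <;> intro x hx <;>
    obtain ⟨hnorm, hbp, hbm⟩ := key x hx
  · -- bound for hPlus
    rcases le_or_gt x 1 with hx1 | hx1
    · have hminx : min x x⁻¹ = x := min_eq_left (le_trans hx1 ((one_le_inv₀ hx).2 hx1))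
      rw [hminx]
      calc ‖mulConv f (hPlus h) x‖ = ‖mulConv f (hMinus h) x‖ := hnorm
        _ ≤ Km * x ^ (M:ℤ) := hbm
        _ = Km * x ^ ((M:ℤ):ℝ) := by rw [Real.rpow_intCast]
        _ ≤ C * x ^ N := by
            apply mul_le_mul hKmC ?_ (Real.rpow_nonneg hx.le _) hC0.le
            exact Real.rpow_le_rpow_of_exponent_ge hx hx1 (by push_cast; linarith)
    · have hminx : min x x⁻¹ = x⁻¹ := min_eq_right (le_trans (inv_le_one_of_one_le₀ hx1.le) hx1.le)
      rw [hminx]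
      have hxinv : (x⁻¹ : ℝ) ^ N = x ^ (-N) := by
        rw [Real.inv_rpow hx.le, ← Real.rpow_neg hx.le]
      calc ‖mulConv f (hPlus h) x‖ ≤ Kp * x ^ (-M:ℤ) := hbp
        _ = Kp * x ^ ((-M:ℤ):ℝ) := by rw [Real.rpow_intCast]
        _ ≤ C * x ^ (-N) := by
            apply mul_le_mul hKpC ?_ (Real.rpow_nonneg hx.le _) hC0.le
            exact Real.rpow_le_rpow_of_exponent_le hx1.le (by push_cast; linarith)
        _ = C * (x⁻¹) ^ N := by rw [hxinv]
  · -- bound for hMinus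
    rcases le_or_gt x 1 with hx1 | hx1
    · have hminx : min x x⁻¹ = x := min_eq_left (le_trans hx1 ((one_le_inv₀ hx).2 hx1))
      rw [hminx]
      calc ‖mulConv f (hMinus h) x‖ ≤ Km * x ^ (M:ℤ) := hbm
        _ = Km * x ^ ((M:ℤ):ℝ) := by rw [Real.rpow_intCast]
        _ ≤ C * x ^ N := by
            apply mul_le_mul hKmC ?_ (Real.rpow_nonneg hx.le _) hC0.le
            exact Real.rpow_le_rpow_of_exponent_ge hx hx1 (by push_cast; linarith)
    · have hminx : min x x⁻¹ = x⁻¹ := min_eq_right (le_trans (inv_le_one_of_one_le₀ hx1.le) hx1.le)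
      rw [hminx]
      have hxinv : (x⁻¹ : ℝ) ^ N = x ^ (-N) := by
        rw [Real.inv_rpow hx.le, ← Real.rpow_neg hx.le]
      calc ‖mulConv f (hMinus h) x‖ = ‖mulConv f (hPlus h) x‖ := hnorm.symm
        _ ≤ Kp * x ^ (-M:ℤ) := hbp
        _ = Kp * x ^ ((-M:ℤ):ℝ) := by rw [Real.rpow_intCast]
        _ ≤ C * x ^ (-N) := by
            apply mul_le_mul hKpC ?_ (Real.rpow_nonneg hx.le _) hC0.le
            exact Real.rpow_le_rpow_of_exponent_le hx1.le (by push_cast; linarith)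
        _ = C * (x⁻¹) ^ N := by rw [hxinv]
end

section
/- Let h ∈ L¹_loc,poly(ℝ₊ˣ) and suppose f ∗ h = 0 identically for some nontrivial f ∈ 𝐒(ℝ₊ˣ). Then for every s ∈ ℂ the Mellin transform integrals M(f ∗ h⁺)(s) = ∫₀^∞ (f ∗ h⁺)(x) x^s dx/x and M(f ∗ h⁻)(s) = ∫₀^∞ (f ∗ h⁻)(x) x^s dx/x converge absolutely, and the functions s ↦ M(f ∗ h⁺)(s) and s ↦ M(f ∗ h⁻)(s) are entire functions on ℂ. -/
open MeasureTheory Set Filter Asymptotics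

open scoped Topology

section Aux


lemma schwartz_bound_int {f : ℝ → ℂ} (hf : IsStrongSchwartz f) (m : ℤ) :
    ∃ C : ℝ, 0 ≤ C ∧ ∀ x : ℝ, 0 < x → ‖f x‖ ≤ C * x ^ (-(m : ℝ)) := by
  obtain ⟨C, hC⟩ := hf.2 m 0
  refine ⟨max C 0, le_max_right _ _, fun x hx => ?_⟩
  have h1 := hC x hx
  rw [iteratedDerivWithin_zero] at h1
  have hxm : (0:ℝ) < x ^ m := zpow_pos hx m
  have h2 : ‖f x‖ ≤ max C 0 / x ^ m := by
    rw [le_div_iff₀ hxm]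
    calc ‖f x‖ * x ^ m = x ^ m * ‖f x‖ := by ring
    _ ≤ C := h1
    _ ≤ max C 0 := le_max_left _ _
  have h3 : x ^ (-(m:ℝ)) = (x ^ m)⁻¹ := by
    rw [Real.rpow_neg hx.le, Real.rpow_intCast]
  rw [h3]
  rw [div_eq_mul_inv] at h2
  exact h2

/-- bound with arbitrary real exponent -/
lemma schwartz_bound {f : ℝ → ℂ} (hf : IsStrongSchwartz f) (r : ℝ) :
    ∃ C : ℝ, 0 ≤ C ∧ ∀ x : ℝ, 0 < x → ‖f x‖ ≤ C * x ^ (-r) := by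
  obtain ⟨C₁, hC₁0, hC₁⟩ := schwartz_bound_int hf ⌈r⌉
  obtain ⟨C₂, hC₂0, hC₂⟩ := schwartz_bound_int hf ⌊r⌋
  refine ⟨C₁ + C₂, by linarith, fun x hx => ?_⟩
  rcases le_or_gt 1 x with hx1 | hx1
  · calc ‖f x‖ ≤ C₁ * x ^ (-(⌈r⌉:ℝ)) := hC₁ x hx
      _ ≤ C₁ * x ^ (-r) := by
          apply mul_le_mul_of_nonneg_left _ hC₁0
          exact Real.rpow_le_rpow_of_exponent_le hx1 (by simpa using Int.le_ceil r)
      _ ≤ (C₁ + C₂) * x ^ (-r) := by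
          apply mul_le_mul_of_nonneg_right (by linarith) (Real.rpow_nonneg hx.le _)
  · calc ‖f x‖ ≤ C₂ * x ^ (-(⌊r⌋:ℝ)) := hC₂ x hx
      _ ≤ C₂ * x ^ (-r) := by
          apply mul_le_mul_of_nonneg_left _ hC₂0
          exact Real.rpow_le_rpow_of_exponent_ge hx hx1.le (by simpa using Int.floor_le r)
      _ ≤ (C₁ + C₂) * x ^ (-r) := by
          apply mul_le_mul_of_nonneg_right (by linarith) (Real.rpow_nonneg hx.le _)


lemma conv_all {f φ : ℝ → ℂ} {Cf r : ℝ} (hCf : 0 ≤ Cf)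
    (hfc : ContinuousOn f (Set.Ioi 0))
    (hfb : ∀ t : ℝ, 0 < t → ‖f t‖ ≤ Cf * t ^ (-r))
    (hφm : AEStronglyMeasurable φ (volume.restrict (Set.Ioi 0)))
    (hW : IntegrableOn (fun y => y ^ (r - 1) * ‖φ y‖) (Set.Ioi 0)) :
    (∀ x : ℝ, 0 < x → IntegrableOn (fun y => f (x / y) * φ y / (y : ℂ)) (Set.Ioi 0)) ∧
    (∃ C : ℝ, ∀ x : ℝ, 0 < x → ‖mulConv f φ x‖ ≤ C * x ^ (-r)) ∧
    ContinuousOn (mulConv f φ) (Set.Ioi 0) := by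
  set W : ℝ → ℝ := fun y => y ^ (r - 1) * ‖φ y‖ with hWdef
  have hW0 : ∀ y : ℝ, 0 < y → 0 ≤ W y := fun y hy =>
    mul_nonneg (Real.rpow_nonneg hy.le _) (norm_nonneg _)
  -- key pointwise bound
  have key : ∀ x : ℝ, 0 < x → ∀ y : ℝ, 0 < y →
      ‖f (x / y) * φ y / (y : ℂ)‖ ≤ Cf * x ^ (-r) * W y := by
    intro x hx y hy
    have hxy : 0 < x / y := div_pos hx hy
    have hnorm : ‖f (x / y) * φ y / (y : ℂ)‖ = ‖f (x / y)‖ * ‖φ y‖ / y := by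
      rw [norm_div, norm_mul, Complex.norm_real, Real.norm_of_nonneg hy.le]
    rw [hnorm]
    have e1 : (x / y) ^ (-r) = x ^ (-r) * y ^ r := by
      rw [Real.div_rpow hx.le hy.le, Real.rpow_neg hy.le r]; field_simp
    have e2 : y ^ (r - 1) = y ^ r / y := by
      rw [Real.rpow_sub hy, Real.rpow_one]
    calc ‖f (x / y)‖ * ‖φ y‖ / y ≤ (Cf * (x / y) ^ (-r)) * ‖φ y‖ / y := by
          gcongr
          exact hfb _ hxy
      _ = Cf * x ^ (-r) * W y := by
          rw [hWdef]; simp only [e1, e2]; field_simp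
  -- measurability of the integrand, for each x > 0
  have hmx : ∀ x : ℝ, 0 < x →
      AEStronglyMeasurable (fun y => f (x / y) * φ y / (y : ℂ))
        (volume.restrict (Set.Ioi 0)) := by
    intro x hx
    have hcont : ContinuousOn (fun y : ℝ => f (x / y)) (Set.Ioi 0) := by
      apply hfc.comp (continuousOn_const.div continuousOn_id
        (fun y hy => ne_of_gt hy))
      exact fun y hy => div_pos hx hy
    have hinv : ContinuousOn (fun y : ℝ => ((y : ℂ))⁻¹) (Set.Ioi 0) := by
      apply (Complex.continuous_ofReal.continuousOn).inv₀
      intro y hy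
      simpa using ne_of_gt (hy : (0:ℝ) < y)
    simp only [div_eq_mul_inv]
    exact ((hcont.aestronglyMeasurable measurableSet_Ioi).mul hφm).mul
      (hinv.aestronglyMeasurable measurableSet_Ioi)
  -- integrability
  have hint : ∀ x : ℝ, 0 < x →
      IntegrableOn (fun y => f (x / y) * φ y / (y : ℂ)) (Set.Ioi 0) := by
    intro x hx
    apply Integrable.mono' (hW.const_mul (Cf * x ^ (-r))) (hmx x hx)
    filter_upwards [ae_restrict_mem measurableSet_Ioi] with y hy
    exact key x hx y hy
  refine ⟨hint, ⟨Cf * ∫ y in Set.Ioi (0:ℝ), W y, fun x hx => ?_⟩, ?_⟩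
  · calc ‖mulConv f φ x‖ ≤ ∫ y in Set.Ioi (0:ℝ), ‖f (x / y) * φ y / (y : ℂ)‖ :=
        norm_integral_le_integral_norm _
      _ ≤ ∫ y in Set.Ioi (0:ℝ), Cf * x ^ (-r) * W y := by
          apply setIntegral_mono_on ((hint x hx).norm) (hW.const_mul _) measurableSet_Ioi
          exact fun y hy => key x hx y hy
      _ = Cf * x ^ (-r) * ∫ y in Set.Ioi (0:ℝ), W y := integral_const_mul _ _
      _ = (Cf * ∫ y in Set.Ioi (0:ℝ), W y) * x ^ (-r) := by ring
  · -- continuity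
    intro x₀ hx₀
    have hx₀' : (0:ℝ) < x₀ := hx₀
    set B : ℝ := max ((x₀ / 2) ^ (-r)) ((2 * x₀) ^ (-r)) with hB
    apply continuousWithinAt_of_dominated (bound := fun y => Cf * B * W y)
    · filter_upwards [self_mem_nhdsWithin] with x hx
      exact hmx x hx
    · have hmem : Set.Ioo (x₀ / 2) (2 * x₀) ∈ 𝓝[Set.Ioi 0] x₀ := by
        apply nhdsWithin_le_nhds
        exact Ioo_mem_nhds (by linarith) (by linarith)
      filter_upwards [hmem] with x hx
      have hx0 : (0:ℝ) < x := lt_trans (by linarith) hx.1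
      filter_upwards [ae_restrict_mem measurableSet_Ioi] with y hy
      have h1 := key x hx0 y hy
      have h2 : x ^ (-r) ≤ B := by
        rcases le_or_gt 0 (-r) with h | h
        · exact le_max_of_le_right (Real.rpow_le_rpow hx0.le hx.2.le h)
        · exact le_max_of_le_left
            (Real.rpow_le_rpow_of_nonpos (by linarith) hx.1.le h.le)
      calc ‖f (x / y) * φ y / (y : ℂ)‖ ≤ Cf * x ^ (-r) * W y := h1
        _ ≤ Cf * B * W y := by
            apply mul_le_mul_of_nonneg_right _ (hW0 y hy)
            exact mul_le_mul_of_nonneg_left h2 hCf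
    · exact hW.const_mul _
    · filter_upwards [ae_restrict_mem measurableSet_Ioi] with y hy
      have hcont' : ContinuousOn (fun x : ℝ => f (x / y)) (Set.Ioi 0) := by
        apply hfc.comp (continuousOn_id.div continuousOn_const
          (fun x _ => ne_of_gt hy))
        exact fun x hx => show (0:ℝ) < x / y from div_pos hx hy
      exact (((hcont'.continuousWithinAt hx₀).mul continuousWithinAt_const).div_const _)


lemma hPlus_eq_indicator (h : ℝ → ℂ) : hPlus h = Set.indicator (Set.Iio 1) h :=
  funext fun x => by simp [hPlus, Set.indicator_apply]

lemma hMinus_eq_indicator (h : ℝ → ℂ) : hMinus h = Set.indicator (Set.Ici 1) h :=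
  funext fun x => by simp [hMinus, Set.indicator_apply]

lemma rpow_continuousOn (p : ℝ) : ContinuousOn (fun y : ℝ => y ^ p) (Set.Ioi 0) :=
  fun y hy => (Real.continuousAt_rpow_const y p (Or.inl (ne_of_gt hy))).continuousWithinAt

lemma weight_meas {h : ℝ → ℂ} (hm : AEStronglyMeasurable h (volume.restrict (Set.Ioi 0)))
    (φ : ℝ → ℂ) (hφ : AEStronglyMeasurable φ (volume.restrict (Set.Ioi 0))) (p : ℝ) :
    AEStronglyMeasurable (fun y => y ^ p * ‖φ y‖) (volume.restrict (Set.Ioi 0)) :=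
  ((rpow_continuousOn p).aestronglyMeasurable measurableSet_Ioi).mul hφ.norm

lemma weight_plus {h : ℝ → ℂ} (hloc : LocallyIntegrableOn h (Set.Ioi 0))
    {a : ℝ} (ha : 0 ≤ a) (hbot : h =O[𝓝[>] (0:ℝ)] (fun y : ℝ => y ^ (-a)))
    {r : ℝ} (hr : a + 1 < r) :
    IntegrableOn (fun y => y ^ (r - 1) * ‖hPlus h y‖) (Set.Ioi 0) := by
  have hm := hloc.aestronglyMeasurable
  have hφ : AEStronglyMeasurable (hPlus h) (volume.restrict (Set.Ioi 0)) := by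
    rw [hPlus_eq_indicator]; exact hm.indicator measurableSet_Iio
  have hWm := weight_meas hm (hPlus h) hφ (r - 1)
  obtain ⟨C₀, hC₀⟩ := hbot.bound
  obtain ⟨u, hu, hsub⟩ := mem_nhdsGT_iff_exists_Ioo_subset.mp hC₀
  have hu0 : (0:ℝ) < u := hu
  set δ : ℝ := min u 1 with hδdef
  have hδ0 : 0 < δ := lt_min hu0 zero_lt_one
  have hδ1 : δ ≤ 1 := min_le_right _ _
  have i1 : IntegrableOn (fun y => y ^ (r - 1) * ‖hPlus h y‖) (Set.Ioo 0 δ) := by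
    have hdom : IntegrableOn (fun y : ℝ => |C₀| * y ^ (r - 1 - a)) (Set.Ioo 0 δ) :=
      ((intervalIntegral.integrableOn_Ioo_rpow_iff hδ0).mpr (by linarith)).const_mul _
    apply Integrable.mono' hdom
      (hWm.mono_measure (Measure.restrict_mono Set.Ioo_subset_Ioi_self le_rfl))
    filter_upwards [ae_restrict_mem measurableSet_Ioo] with y hy
    have hy0 : (0:ℝ) < y := hy.1
    have hyδ : y < δ := hy.2
    have hbnd : ‖h y‖ ≤ C₀ * y ^ (-a) := by
      have h' : ‖h y‖ ≤ C₀ * ‖y ^ (-a)‖ := hsub ⟨hy0, lt_of_lt_of_le hyδ (min_le_left _ _)⟩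
      rwa [Real.norm_of_nonneg (Real.rpow_nonneg hy0.le (-a))] at h'
    have hplus : hPlus h y = h y := by simp [hPlus, lt_of_lt_of_le hyδ hδ1]
    have h0 : 0 ≤ y ^ (r - 1) * ‖hPlus h y‖ :=
      mul_nonneg (Real.rpow_nonneg hy0.le _) (norm_nonneg _)
    rw [Real.norm_of_nonneg h0, hplus]
    calc y ^ (r - 1) * ‖h y‖ ≤ y ^ (r - 1) * (C₀ * y ^ (-a)) := by
          apply mul_le_mul_of_nonneg_left hbnd (Real.rpow_nonneg hy0.le _)
      _ = C₀ * (y ^ (r - 1) * y ^ (-a)) := by ring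
      _ = C₀ * y ^ (r - 1 - a) := by rw [← Real.rpow_add hy0]; ring_nf
      _ ≤ |C₀| * y ^ (r - 1 - a) :=
          mul_le_mul_of_nonneg_right (le_abs_self _) (Real.rpow_nonneg hy0.le _)
  have i2 : IntegrableOn (fun y => y ^ (r - 1) * ‖hPlus h y‖) (Set.Icc δ 1) := by
    have hsubset : Set.Icc δ 1 ⊆ Set.Ioi 0 := fun y hy => lt_of_lt_of_le hδ0 hy.1
    have hint : IntegrableOn (fun y => ‖h y‖) (Set.Icc δ 1) :=
      (hloc.integrableOn_compact_subset hsubset isCompact_Icc).norm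
    apply Integrable.mono' hint
      (hWm.mono_measure (Measure.restrict_mono hsubset le_rfl))
    filter_upwards [ae_restrict_mem measurableSet_Icc] with y hy
    have hy0 : (0:ℝ) < y := lt_of_lt_of_le hδ0 hy.1
    have h0 : 0 ≤ y ^ (r - 1) * ‖hPlus h y‖ :=
      mul_nonneg (Real.rpow_nonneg hy0.le _) (norm_nonneg _)
    rw [Real.norm_of_nonneg h0]
    have h1 : y ^ (r - 1) ≤ 1 := Real.rpow_le_one hy0.le hy.2 (by linarith)
    have h2 : ‖hPlus h y‖ ≤ ‖h y‖ := by
      by_cases hlt : y < 1 <;> simp [hPlus, hlt]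
    calc y ^ (r - 1) * ‖hPlus h y‖ ≤ 1 * ‖h y‖ :=
        mul_le_mul h1 h2 (norm_nonneg _) zero_le_one
      _ = ‖h y‖ := one_mul _
  have i3 : IntegrableOn (fun y => y ^ (r - 1) * ‖hPlus h y‖) (Set.Ioi 1) := by
    apply (integrableOn_congr_fun (g := fun y => y ^ (r - 1) * ‖hPlus h y‖)
      (f := fun _ => (0:ℝ)) ?_ measurableSet_Ioi).mp (integrableOn_zero)
    intro y hy
    have : ¬ (y < 1) := not_lt.mpr (le_of_lt hy)
    simp [hPlus, this]
  have cover : Set.Ioi (0:ℝ) ⊆ (Set.Ioo 0 δ ∪ Set.Icc δ 1) ∪ Set.Ioi 1 := by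
    intro y hy
    rcases lt_or_ge y δ with h | h
    · exact Or.inl (Or.inl ⟨hy, h⟩)
    · rcases le_or_gt y 1 with h' | h'
      · exact Or.inl (Or.inr ⟨h, h'⟩)
      · exact Or.inr h'
  exact ((i1.union i2).union i3).mono_set cover

lemma weight_minus {h : ℝ → ℂ} (hloc : LocallyIntegrableOn h (Set.Ioi 0))
    {a : ℝ} (ha : 0 ≤ a) (htop : h =O[atTop] (fun y : ℝ => y ^ a))
    {r : ℝ} (hr : r + a < 0) :
    IntegrableOn (fun y => y ^ (r - 1) * ‖hMinus h y‖) (Set.Ioi 0) := by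
  have hm := hloc.aestronglyMeasurable
  have hφ : AEStronglyMeasurable (hMinus h) (volume.restrict (Set.Ioi 0)) := by
    rw [hMinus_eq_indicator]; exact hm.indicator measurableSet_Ici
  have hWm := weight_meas hm (hMinus h) hφ (r - 1)
  obtain ⟨C₀, hC₀⟩ := htop.bound
  rw [eventually_atTop] at hC₀
  obtain ⟨R, hR⟩ := hC₀
  set R' : ℝ := max R 1 with hR'def
  have hR'1 : (1:ℝ) ≤ R' := le_max_right _ _
  have hR'0 : (0:ℝ) < R' := lt_of_lt_of_le zero_lt_one hR'1
  have i1 : IntegrableOn (fun y => y ^ (r - 1) * ‖hMinus h y‖) (Set.Ioo 0 1) := by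
    apply (integrableOn_congr_fun (g := fun y => y ^ (r - 1) * ‖hMinus h y‖)
      (f := fun _ => (0:ℝ)) ?_ measurableSet_Ioo).mp (integrableOn_zero)
    intro y hy
    have : ¬ ((1:ℝ) ≤ y) := not_le.mpr hy.2
    simp [hMinus, this]
  have i2 : IntegrableOn (fun y => y ^ (r - 1) * ‖hMinus h y‖) (Set.Icc 1 R') := by
    have hsubset : Set.Icc (1:ℝ) R' ⊆ Set.Ioi 0 := fun y hy =>
      lt_of_lt_of_le zero_lt_one hy.1
    have hint : IntegrableOn (fun y => ‖h y‖) (Set.Icc 1 R') :=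
      (hloc.integrableOn_compact_subset hsubset isCompact_Icc).norm
    apply Integrable.mono' hint
      (hWm.mono_measure (Measure.restrict_mono hsubset le_rfl))
    filter_upwards [ae_restrict_mem measurableSet_Icc] with y hy
    have hy0 : (0:ℝ) < y := lt_of_lt_of_le zero_lt_one hy.1
    have h0 : 0 ≤ y ^ (r - 1) * ‖hMinus h y‖ :=
      mul_nonneg (Real.rpow_nonneg hy0.le _) (norm_nonneg _)
    rw [Real.norm_of_nonneg h0]
    have h1 : y ^ (r - 1) ≤ 1 :=
      Real.rpow_le_one_of_one_le_of_nonpos hy.1 (by linarith)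
    have h2 : ‖hMinus h y‖ ≤ ‖h y‖ := by
      by_cases hle : (1:ℝ) ≤ y <;> simp [hMinus, hle]
    calc y ^ (r - 1) * ‖hMinus h y‖ ≤ 1 * ‖h y‖ :=
        mul_le_mul h1 h2 (norm_nonneg _) zero_le_one
      _ = ‖h y‖ := one_mul _
  have i3 : IntegrableOn (fun y => y ^ (r - 1) * ‖hMinus h y‖) (Set.Ioi R') := by
    have hdom : IntegrableOn (fun y : ℝ => |C₀| * y ^ (r - 1 + a)) (Set.Ioi R') :=
      (integrableOn_Ioi_rpow_of_lt (by linarith) hR'0).const_mul _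
    apply Integrable.mono' hdom
      (hWm.mono_measure (Measure.restrict_mono (fun y hy =>
        lt_trans hR'0 hy) le_rfl))
    filter_upwards [ae_restrict_mem measurableSet_Ioi] with y hy
    have hy1 : (1:ℝ) ≤ y := le_of_lt (lt_of_le_of_lt hR'1 hy)
    have hy0 : (0:ℝ) < y := lt_of_lt_of_le zero_lt_one hy1
    have hbnd : ‖h y‖ ≤ C₀ * y ^ a := by
      have h' : ‖h y‖ ≤ C₀ * ‖y ^ a‖ := hR y (le_of_lt (lt_of_le_of_lt (le_max_left R 1) hy))
      rwa [Real.norm_of_nonneg (Real.rpow_nonneg hy0.le a)] at h'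
    have hminus : hMinus h y = h y := by simp [hMinus, hy1]
    have h0 : 0 ≤ y ^ (r - 1) * ‖hMinus h y‖ :=
      mul_nonneg (Real.rpow_nonneg hy0.le _) (norm_nonneg _)
    rw [Real.norm_of_nonneg h0, hminus]
    calc y ^ (r - 1) * ‖h y‖ ≤ y ^ (r - 1) * (C₀ * y ^ a) := by
          apply mul_le_mul_of_nonneg_left hbnd (Real.rpow_nonneg hy0.le _)
      _ = C₀ * (y ^ (r - 1) * y ^ a) := by ring
      _ = C₀ * y ^ (r - 1 + a) := by rw [← Real.rpow_add hy0]
      _ ≤ |C₀| * y ^ (r - 1 + a) :=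
          mul_le_mul_of_nonneg_right (le_abs_self _) (Real.rpow_nonneg hy0.le _)
  have cover : Set.Ioi (0:ℝ) ⊆ (Set.Ioo 0 1 ∪ Set.Icc 1 R') ∪ Set.Ioi R' := by
    intro y hy
    rcases lt_or_ge y 1 with h | h
    · exact Or.inl (Or.inl ⟨hy, h⟩)
    · rcases le_or_gt y R' with h' | h'
      · exact Or.inl (Or.inr ⟨h, h'⟩)
      · exact Or.inr h'
  exact ((i1.union i2).union i3).mono_set cover


lemma final_piece {G : ℝ → ℂ} (Gloc : LocallyIntegrableOn G (Set.Ioi 0))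
    (Gtop : ∀ c : ℝ, G =O[atTop] fun x : ℝ => x ^ (-c))
    (Gbot : ∀ c : ℝ, G =O[𝓝[>] (0:ℝ)] fun x : ℝ => x ^ (-c)) :
    (∀ s : ℂ, IntegrableOn (fun x : ℝ => G x * (x:ℂ) ^ s / (x:ℂ)) (Set.Ioi 0)) ∧
    Differentiable ℂ (mellinT G) := by
  have eqOn : ∀ s : ℂ, Set.EqOn (fun x : ℝ => (x:ℂ) ^ (s - 1) • G x)
      (fun x : ℝ => G x * (x:ℂ) ^ s / (x:ℂ)) (Set.Ioi 0) := by
    intro s x hx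
    have hx0 : (0:ℝ) < x := hx
    have hne : (x:ℂ) ≠ 0 := by exact_mod_cast ne_of_gt hx0
    simp only [smul_eq_mul]
    rw [Complex.cpow_sub _ _ hne, Complex.cpow_one]
    ring
  have hmel : ∀ s : ℂ, MellinConvergent G s := fun s =>
    mellinConvergent_of_isBigO_rpow Gloc (Gtop (s.re + 1)) (by linarith)
      (Gbot (s.re - 1)) (by linarith)
  have hmT : mellinT G = mellin G := by
    funext s
    exact (setIntegral_congr_fun measurableSet_Ioi (eqOn s)).symm
  constructor
  · exact fun s => IntegrableOn.congr_fun (hmel s) (eqOn s) measurableSet_Ioi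
  · intro s
    rw [hmT]
    exact mellin_differentiableAt_of_isBigO_rpow Gloc (Gtop (s.re + 1)) (by linarith)
      (Gbot (s.re - 1)) (by linarith)

end Aux

/-- Lemma 2.2: if `f ∗ h ≡ 0` for a nontrivial `f ∈ 𝐒(ℝ₊ˣ)`, then the
Mellin transforms `M(f ∗ h⁺)` and `M(f ∗ h⁻)` converge absolutely for every `s` and are
entire functions. -/
theorem mellin_mulConv_plus_entire (f h : ℝ → ℂ)
    (hf : IsStrongSchwartz f) (hh : IsLocPoly h)
    (hnt : ∃ x : ℝ, 0 < x ∧ f x ≠ 0)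
    (hconv : ∀ x : ℝ, 0 < x → mulConv f h x = 0) :
    (∀ s : ℂ,
      MeasureTheory.IntegrableOn
        (fun x : ℝ => mulConv f (hPlus h) x * (x : ℂ) ^ s / (x : ℂ)) (Set.Ioi 0) ∧
      MeasureTheory.IntegrableOn
        (fun x : ℝ => mulConv f (hMinus h) x * (x : ℂ) ^ s / (x : ℂ)) (Set.Ioi 0)) ∧
    Differentiable ℂ (mellinT (mulConv f (hPlus h))) ∧
    Differentiable ℂ (mellinT (mulConv f (hMinus h))) := by
  obtain ⟨hloc, a, ha, htop, hbot⟩ := hh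
  have hmeas := hloc.aestronglyMeasurable
  have hφp : AEStronglyMeasurable (hPlus h) (volume.restrict (Set.Ioi 0)) := by
    rw [hPlus_eq_indicator]; exact hmeas.indicator measurableSet_Iio
  have hφm : AEStronglyMeasurable (hMinus h) (volume.restrict (Set.Ioi 0)) := by
    rw [hMinus_eq_indicator]; exact hmeas.indicator measurableSet_Ici
  have hfc : ContinuousOn f (Set.Ioi 0) := hf.1.continuousOn
  -- the plus piece, for every exponent r with a + 1 < r
  have Pall : ∀ r : ℝ, a + 1 < r →
      (∀ x : ℝ, 0 < x → IntegrableOn (fun y => f (x / y) * hPlus h y / (y : ℂ)) (Set.Ioi 0)) ∧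
      (∃ C : ℝ, ∀ x : ℝ, 0 < x → ‖mulConv f (hPlus h) x‖ ≤ C * x ^ (-r)) ∧
      ContinuousOn (mulConv f (hPlus h)) (Set.Ioi 0) := by
    intro r hr
    obtain ⟨Cf, hCf0, hCf⟩ := schwartz_bound hf r
    exact conv_all hCf0 hfc hCf hφp (weight_plus hloc ha hbot hr)
  have Mall : ∀ r : ℝ, r + a < 0 →
      (∀ x : ℝ, 0 < x → IntegrableOn (fun y => f (x / y) * hMinus h y / (y : ℂ)) (Set.Ioi 0)) ∧
      (∃ C : ℝ, ∀ x : ℝ, 0 < x → ‖mulConv f (hMinus h) x‖ ≤ C * x ^ (-r)) ∧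
      ContinuousOn (mulConv f (hMinus h)) (Set.Ioi 0) := by
    intro r hr
    obtain ⟨Cf, hCf0, hCf⟩ := schwartz_bound hf r
    exact conv_all hCf0 hfc hCf hφm (weight_minus hloc ha htop hr)
  have Pspec := Pall (a + 2) (by linarith)
  have Mspec := Mall (-(a + 1)) (by linarith)
  have Pcont := Pspec.2.2
  have Mcont := Mspec.2.2
  -- relation: P x + M x = 0 for x > 0
  have rel : ∀ x : ℝ, 0 < x → mulConv f (hPlus h) x + mulConv f (hMinus h) x = 0 := by
    intro x hx
    rw [← hconv x hx]
    unfold mulConv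
    rw [← integral_add (Pspec.1 x hx) (Mspec.1 x hx)]
    apply setIntegral_congr_fun measurableSet_Ioi
    intro y hy
    rcases lt_or_ge y 1 with h1 | h1
    · simp [hPlus, hMinus, h1, not_le.mpr h1]
    · simp [hPlus, hMinus, not_lt.mpr h1, h1]
  -- big-O of M near 0, P at infinity, then transfer
  have Ptop : ∀ c : ℝ, mulConv f (hPlus h) =O[atTop] fun x : ℝ => x ^ (-c) := by
    intro c
    set r : ℝ := max c (a + 2) with hrdef
    obtain ⟨C, hC⟩ := (Pall r (lt_of_lt_of_le (by linarith) (le_max_right _ _))).2.1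
    rw [isBigO_iff]
    refine ⟨|C|, ?_⟩
    filter_upwards [eventually_ge_atTop (1:ℝ)] with x hx
    have hx0 : (0:ℝ) < x := lt_of_lt_of_le zero_lt_one hx
    calc ‖mulConv f (hPlus h) x‖ ≤ C * x ^ (-r) := hC x hx0
      _ ≤ |C| * x ^ (-r) :=
          mul_le_mul_of_nonneg_right (le_abs_self _) (Real.rpow_nonneg hx0.le _)
      _ ≤ |C| * x ^ (-c) := by
          apply mul_le_mul_of_nonneg_left _ (abs_nonneg _)
          exact Real.rpow_le_rpow_of_exponent_le hx (by simp [hrdef])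
      _ = |C| * ‖x ^ (-c)‖ := by
          rw [Real.norm_of_nonneg (Real.rpow_nonneg hx0.le _)]
  have Mbot : ∀ c : ℝ, mulConv f (hMinus h) =O[𝓝[>] (0:ℝ)] fun x : ℝ => x ^ (-c) := by
    intro c
    set r : ℝ := min c (-(a + 1)) with hrdef
    have hra : r + a < 0 := by
      have := min_le_right c (-(a+1))
      simp only [hrdef]
      linarith [this]
    obtain ⟨C, hC⟩ := (Mall r hra).2.1
    rw [isBigO_iff]
    refine ⟨|C|, ?_⟩
    have hIoo : Set.Ioo (0:ℝ) 1 ∈ 𝓝[>] (0:ℝ) := Ioo_mem_nhdsGT_of_mem ⟨le_rfl, zero_lt_one⟩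
    filter_upwards [hIoo] with x hx
    have hx0 : (0:ℝ) < x := hx.1
    calc ‖mulConv f (hMinus h) x‖ ≤ C * x ^ (-r) := hC x hx0
      _ ≤ |C| * x ^ (-r) :=
          mul_le_mul_of_nonneg_right (le_abs_self _) (Real.rpow_nonneg hx0.le _)
      _ ≤ |C| * x ^ (-c) := by
          apply mul_le_mul_of_nonneg_left _ (abs_nonneg _)
          apply Real.rpow_le_rpow_of_exponent_ge hx0 hx.2.le
          have : r ≤ c := min_le_left _ _
          linarith
      _ = |C| * ‖x ^ (-c)‖ := by
          rw [Real.norm_of_nonneg (Real.rpow_nonneg hx0.le _)]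
  have PeqM : ∀ x : ℝ, 0 < x → mulConv f (hPlus h) x = -mulConv f (hMinus h) x := by
    intro x hx
    have := rel x hx
    linear_combination this
  have Pbot : ∀ c : ℝ, mulConv f (hPlus h) =O[𝓝[>] (0:ℝ)] fun x : ℝ => x ^ (-c) := by
    intro c
    have heq : (fun x : ℝ => -mulConv f (hMinus h) x) =ᶠ[𝓝[>] (0:ℝ)]
        mulConv f (hPlus h) := by
      filter_upwards [self_mem_nhdsWithin] with x hx
      exact (PeqM x hx).symm
    exact ((Mbot c).neg_left).congr' heq EventuallyEq.rfl
  have Mtop : ∀ c : ℝ, mulConv f (hMinus h) =O[atTop] fun x : ℝ => x ^ (-c) := by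
    intro c
    have heq : (fun x : ℝ => -mulConv f (hPlus h) x) =ᶠ[atTop]
        mulConv f (hMinus h) := by
      filter_upwards [eventually_gt_atTop (0:ℝ)] with x hx
      have := rel x hx
      linear_combination -this
    exact ((Ptop c).neg_left).congr' heq EventuallyEq.rfl
  have Ploc : LocallyIntegrableOn (mulConv f (hPlus h)) (Set.Ioi 0) :=
    Pcont.locallyIntegrableOn measurableSet_Ioi
  have Mloc : LocallyIntegrableOn (mulConv f (hMinus h)) (Set.Ioi 0) :=
    Mcont.locallyIntegrableOn measurableSet_Ioi
  obtain ⟨Pint, Pdiff⟩ := final_piece Ploc Ptop Pbot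
  obtain ⟨Mint, Mdiff⟩ := final_piece Mloc Mtop Mbot
  exact ⟨fun s => ⟨Pint s, Mint s⟩, Pdiff, Mdiff⟩
end

section
/- Let f ∈ 𝐒(ℝ₊ˣ) and let h : (0,∞) → ℂ be locally integrable with |h(x)| ≤ C x^{−a} for 0 < x < 1 (some a ≥ 0, C > 0). Then for every s ∈ ℂ with Re(s) > a, the integrals M(f ∗ h⁺)(s) and ∫₀¹ h(x) x^s dx/x converge absolutely and M(f ∗ h⁺)(s) = M(f)(s) · ∫₀¹ h(x) x^s dx/x. -/
open MeasureTheory Set Filter Asymptotics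

lemma aux_qmp_div :
    Measure.QuasiMeasurePreserving (fun p : ℝ × ℝ => p.1 / p.2)
      ((volume.restrict (Set.Ioi (0:ℝ))).prod (volume.restrict (Set.Ioi (0:ℝ))))
      (volume.restrict (Set.Ioi (0:ℝ))) := by
  have hmeas : Measurable fun p : ℝ × ℝ => p.1 / p.2 := measurable_fst.div measurable_snd
  refine ⟨hmeas, Measure.AbsolutelyContinuous.mk fun s hs hs0 => ?_⟩
  rw [Measure.restrict_apply hs] at hs0
  rw [Measure.map_apply hmeas hs, Measure.prod_apply_symm (hmeas hs)]
  have hae : (fun y : ℝ => (volume.restrict (Set.Ioi (0:ℝ)))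
      ((fun x => (x, y)) ⁻¹' ((fun p : ℝ × ℝ => p.1 / p.2) ⁻¹' s)))
      =ᵐ[volume.restrict (Set.Ioi (0:ℝ))] (fun _ => 0) := by
    filter_upwards [ae_restrict_mem measurableSet_Ioi] with y hy
    have hy0 : (0:ℝ) < y := hy
    rw [Measure.restrict_apply (measurable_prodMk_right (hmeas hs))]
    refine measure_mono_null (t := (fun x : ℝ => x * y⁻¹) ⁻¹' (s ∩ Set.Ioi 0)) ?_ ?_
    · rintro x ⟨hxs, hx0⟩
      have hx0' : (0:ℝ) < x := hx0
      constructor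
      · simpa [div_eq_mul_inv] using hxs
      · have : (0:ℝ) < x * y⁻¹ := by positivity
        exact this
    · rw [Real.volume_preimage_mul_right (by positivity : (y:ℝ)⁻¹ ≠ 0), hs0, mul_zero]
  rw [lintegral_congr_ae hae, lintegral_zero]

lemma aux_conv_fubini (F G : ℝ → ℂ) (hF : IntegrableOn F (Set.Ioi 0))
    (hG : IntegrableOn G (Set.Ioi 0)) :
    MeasureTheory.IntegrableOn
      (fun x : ℝ => ∫ y in Set.Ioi (0:ℝ), F (x / y) * G y / (y:ℂ)) (Set.Ioi 0) ∧
    (∫ x in Set.Ioi (0:ℝ), ∫ y in Set.Ioi (0:ℝ), F (x / y) * G y / (y:ℂ)) =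
      (∫ x in Set.Ioi (0:ℝ), F x) * ∫ y in Set.Ioi (0:ℝ), G y := by
  set μ := volume.restrict (Set.Ioi (0:ℝ)) with hμ
  set Φ : ℝ × ℝ → ℂ := fun p => F (p.1 / p.2) * G p.2 / (p.2:ℂ) with hΦdef
  have hmeasΦ : AEStronglyMeasurable Φ (μ.prod μ) := by
    have h1 : AEStronglyMeasurable (fun p : ℝ × ℝ => F (p.1 / p.2)) (μ.prod μ) :=
      hF.aestronglyMeasurable.comp_quasiMeasurePreserving aux_qmp_div
    have h2 : AEStronglyMeasurable (fun p : ℝ × ℝ => G p.2) (μ.prod μ) :=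
      hG.aestronglyMeasurable.comp_quasiMeasurePreserving Measure.quasiMeasurePreserving_snd
    have h3 : AEStronglyMeasurable (fun p : ℝ × ℝ => ((p.2 : ℂ))⁻¹) (μ.prod μ) :=
      ((Complex.measurable_ofReal.comp measurable_snd).inv).aestronglyMeasurable
    simpa only [hΦdef, div_eq_mul_inv, Pi.mul_def] using (h1.mul h2).mul h3
  have hslice : ∀ y : ℝ, 0 < y → Integrable (fun x => Φ (x, y)) μ := by
    intro y hy
    have h1 : IntegrableOn (fun x => F (x * y⁻¹)) (Set.Ioi 0) := by
      have := (integrableOn_Ioi_comp_mul_right_iff F 0 (inv_pos.mpr hy)).mpr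
      rw [zero_mul] at this
      exact this hF
    have h2 := h1.mul_const (G y / (y:ℂ))
    refine h2.congr (ae_of_all _ fun x => ?_)
    simp only [Φ, div_eq_mul_inv, mul_assoc]
  have hFnorm : ∀ y : ℝ, 0 < y →
      (∫ x in Set.Ioi (0:ℝ), ‖F (x * y⁻¹)‖) = y * ∫ x in Set.Ioi (0:ℝ), ‖F x‖ := by
    intro y hy
    rw [integral_comp_mul_right_Ioi (fun x => ‖F x‖) 0 (inv_pos.mpr hy), inv_inv, zero_mul,
      smul_eq_mul]
  have hnormΦ : ∀ y : ℝ, 0 < y → (∫ x, ‖Φ (x, y)‖ ∂μ)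
      = (∫ x in Set.Ioi (0:ℝ), ‖F x‖) * ‖G y‖ := by
    intro y hy
    have hb : (∫ x, ‖Φ (x, y)‖ ∂μ)
        = ∫ x in Set.Ioi (0:ℝ), ‖F (x * y⁻¹)‖ * (‖G y‖ * y⁻¹) := by
      refine setIntegral_congr_fun measurableSet_Ioi fun x hx => ?_
      simp only [Φ, norm_div, norm_mul, norm_inv, Complex.norm_real, Real.norm_eq_abs,
        abs_of_pos hy, div_eq_mul_inv, mul_assoc]
    rw [hb, integral_mul_const, hFnorm y hy]
    field_simp
  have hΦint : Integrable Φ (μ.prod μ) := by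
    rw [integrable_prod_iff' hmeasΦ]
    constructor
    · filter_upwards [ae_restrict_mem measurableSet_Ioi] with y hy using hslice y hy
    · refine (hG.norm.const_mul (∫ x in Set.Ioi (0:ℝ), ‖F x‖)).congr ?_
      filter_upwards [ae_restrict_mem measurableSet_Ioi] with y hy
      rw [hnormΦ y hy]
  constructor
  · exact hΦint.integral_prod_left
  · have hswap : (∫ x, ∫ y, Φ (x, y) ∂μ ∂μ) = ∫ y, ∫ x, Φ (x, y) ∂μ ∂μ :=
      integral_integral_swap hΦint
    have hinner : ∀ y : ℝ, 0 < y →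
        (∫ x, Φ (x, y) ∂μ) = (∫ x in Set.Ioi (0:ℝ), F x) * G y := by
      intro y hy
      have hyne : (y:ℂ) ≠ 0 := Complex.ofReal_ne_zero.mpr hy.ne'
      have h1 : (∫ x, Φ (x, y) ∂μ)
          = (∫ x in Set.Ioi (0:ℝ), F (x * y⁻¹)) * (G y / (y:ℂ)) := by
        rw [← integral_mul_const]
        refine setIntegral_congr_fun measurableSet_Ioi fun x hx => ?_
        simp only [Φ, div_eq_mul_inv, mul_assoc]
      rw [h1, integral_comp_mul_right_Ioi F 0 (inv_pos.mpr hy), inv_inv, zero_mul,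
        Complex.real_smul]
      field_simp
    rw [hswap]
    have h2 : (∫ y, ∫ x, Φ (x, y) ∂μ ∂μ)
        = ∫ y in Set.Ioi (0:ℝ), (∫ x in Set.Ioi (0:ℝ), F x) * G y :=
      setIntegral_congr_fun measurableSet_Ioi fun y hy => hinner y hy
    rw [h2, integral_const_mul]

lemma aux_schwartz_bound (f : ℝ → ℂ) (hf : IsStrongSchwartz f) (m : ℤ) :
    ∃ c : ℝ, ∀ x ∈ Set.Ioi (0:ℝ), ‖f x‖ ≤ c * x ^ (-(m:ℝ)) := by
  obtain ⟨c, hc⟩ := hf.2 m 0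
  refine ⟨c, fun x hx => ?_⟩
  have hx0 : (0:ℝ) < x := hx
  have h := hc x hx
  rw [iteratedDerivWithin_zero] at h
  have hxm : (0:ℝ) < x ^ m := by positivity
  have h2 : ‖f x‖ ≤ c / x ^ m := (le_div_iff₀ hxm).mpr (by rw [mul_comm] at h; exact h)
  rw [show -(m:ℝ) = ((-m : ℤ) : ℝ) by push_cast; ring, Real.rpow_intCast, zpow_neg,
    ← div_eq_mul_inv]
  exact h2

lemma aux_mellin_f_integrable (f : ℝ → ℂ) (hf : IsStrongSchwartz f) (s : ℂ) :
    MeasureTheory.IntegrableOn (fun x : ℝ => f x * (x:ℂ) ^ s / (x:ℂ)) (Set.Ioi 0) := by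
  have hloc : LocallyIntegrableOn f (Set.Ioi 0) :=
    (hf.1.continuousOn).locallyIntegrableOn measurableSet_Ioi
  obtain ⟨c1, hc1⟩ := aux_schwartz_bound f hf (⌈s.re⌉ + 1)
  obtain ⟨c0, hc0⟩ := aux_schwartz_bound f hf (⌊s.re⌋ - 1)
  have htop : f =O[atTop] (fun x : ℝ => x ^ (-((⌈s.re⌉ + 1 : ℤ) : ℝ))) := by
    rw [Asymptotics.isBigO_iff]
    refine ⟨c1, ?_⟩
    filter_upwards [eventually_ge_atTop (1:ℝ)] with x hx
    have hx0 : (0:ℝ) < x := lt_of_lt_of_le one_pos hx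
    rw [Real.norm_eq_abs, abs_of_nonneg (Real.rpow_nonneg hx0.le _)]
    exact hc1 x hx0
  have hbot : f =O[nhdsWithin 0 (Set.Ioi 0)]
      (fun x : ℝ => x ^ (-((⌊s.re⌋ - 1 : ℤ) : ℝ))) := by
    rw [Asymptotics.isBigO_iff]
    refine ⟨c0, ?_⟩
    filter_upwards [self_mem_nhdsWithin] with x hx
    have hx0 : (0:ℝ) < x := hx
    rw [Real.norm_eq_abs, abs_of_nonneg (Real.rpow_nonneg hx0.le _)]
    exact hc0 x hx0
  have h1 : s.re < ((⌈s.re⌉ + 1 : ℤ) : ℝ) := by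
    push_cast
    have := Int.le_ceil s.re
    linarith
  have h2 : ((⌊s.re⌋ - 1 : ℤ) : ℝ) < s.re := by
    push_cast
    have := Int.floor_le s.re
    linarith
  have hmc := mellinConvergent_of_isBigO_rpow hloc htop h1 hbot h2
  refine (integrableOn_congr_fun (fun x hx => ?_) measurableSet_Ioi).mpr hmc
  have hx0 : (0:ℝ) < x := hx
  have hxne : (x:ℂ) ≠ 0 := Complex.ofReal_ne_zero.mpr hx0.ne'
  rw [smul_eq_mul, Complex.cpow_sub _ _ hxne, Complex.cpow_one]
  ring

lemma aux_h_integrable (h : ℝ → ℂ) (hloc : LocallyIntegrableOn h (Set.Ioi 0))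
    (a C : ℝ) (hbound : ∀ x : ℝ, 0 < x → x < 1 → ‖h x‖ ≤ C * x ^ (-a)) (s : ℂ)
    (hs : a < s.re) :
    MeasureTheory.IntegrableOn (fun x : ℝ => h x * (x:ℂ) ^ s / (x:ℂ)) (Set.Ioo 0 1) := by
  have hmeas : AEStronglyMeasurable (fun x : ℝ => h x * (x:ℂ) ^ s / (x:ℂ))
      (volume.restrict (Set.Ioo 0 1)) := by
    have h1 : AEStronglyMeasurable h (volume.restrict (Set.Ioo (0:ℝ) 1)) :=
      hloc.aestronglyMeasurable.mono_measure
        (Measure.restrict_mono Set.Ioo_subset_Ioi_self le_rfl)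
    have h2 : Measurable fun x : ℝ => (x:ℂ) ^ s :=
      Complex.measurable_ofReal.pow measurable_const
    simpa only [div_eq_mul_inv, Pi.mul_def, Pi.inv_def] using
      (h1.mul h2.aestronglyMeasurable).mul
        (Complex.measurable_ofReal.inv.aestronglyMeasurable)
  have hmaj : IntegrableOn (fun x : ℝ => C * x ^ (s.re - a - 1)) (Set.Ioo 0 1) := by
    have : IntegrableOn (fun x : ℝ => x ^ (s.re - a - 1)) (Set.Ioo 0 1) :=
      (intervalIntegral.integrableOn_Ioo_rpow_iff zero_lt_one).mpr (by linarith)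
    exact this.const_mul C
  refine Integrable.mono' hmaj hmeas ?_
  filter_upwards [ae_restrict_mem measurableSet_Ioo] with x hx
  have hx0 : (0:ℝ) < x := hx.1
  have heq : ‖h x * (x:ℂ) ^ s / (x:ℂ)‖ = ‖h x‖ * (x ^ s.re / x) := by
    rw [norm_div, norm_mul, Complex.norm_cpow_eq_rpow_re_of_pos hx0, Complex.norm_real, Real.norm_eq_abs,
      abs_of_pos hx0, mul_div_assoc]
  rw [heq]
  calc ‖h x‖ * (x ^ s.re / x) ≤ (C * x ^ (-a)) * (x ^ s.re / x) := by
        gcongr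
        exact hbound x hx0 hx.2
    _ = C * x ^ (s.re - a - 1) := by
        rw [← Real.rpow_sub_one hx0.ne', mul_assoc, ← Real.rpow_add hx0,
          show -a + (s.re - 1) = s.re - a - 1 by ring]

/-- for `Re(s) > a`, `M(f ∗ h⁺)(s) = M(f)(s) · ∫₀¹ h(x) x^s dx/x`,
all integrals converging absolutely. -/
theorem mellin_mulConv_plus_factorization (f h : ℝ → ℂ) (hf : IsStrongSchwartz f)
    (hloc : MeasureTheory.LocallyIntegrableOn h (Set.Ioi 0))
    (a C : ℝ) (ha : 0 ≤ a) (hC : 0 < C)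
    (hbound : ∀ x : ℝ, 0 < x → x < 1 → ‖h x‖ ≤ C * x ^ (-a)) :
    ∀ s : ℂ, a < s.re →
      MeasureTheory.IntegrableOn
        (fun x : ℝ => mulConv f (hPlus h) x * (x : ℂ) ^ s / (x : ℂ)) (Set.Ioi 0) ∧
      MeasureTheory.IntegrableOn
        (fun x : ℝ => h x * (x : ℂ) ^ s / (x : ℂ)) (Set.Ioo 0 1) ∧
      mellinT (mulConv f (hPlus h)) s =
        mellinT f s * ∫ x in Set.Ioo (0:ℝ) 1, h x * (x : ℂ) ^ s / (x : ℂ) := by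
  intro s hs
  have hFint : IntegrableOn (fun x : ℝ => f x * (x:ℂ) ^ s / (x:ℂ)) (Set.Ioi 0) :=
    aux_mellin_f_integrable f hf s
  have hB : IntegrableOn (fun x : ℝ => h x * (x:ℂ) ^ s / (x:ℂ)) (Set.Ioo 0 1) :=
    aux_h_integrable h hloc a C hbound s hs
  set F : ℝ → ℂ := fun x => f x * (x:ℂ) ^ s / (x:ℂ) with hFdef
  set G : ℝ → ℂ := fun y => hPlus h y * (y:ℂ) ^ s / (y:ℂ) with hGdef
  have hGind : G = Set.indicator (Set.Iio 1) (fun y : ℝ => h y * (y:ℂ) ^ s / (y:ℂ)) := by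
    funext y
    by_cases hy : y < 1 <;>
      simp [hGdef, hPlus, Set.indicator_apply, hy, Set.mem_Iio]
  have hrr : (volume.restrict (Set.Ioi (0:ℝ))).restrict (Set.Iio 1)
      = volume.restrict (Set.Ioo 0 1) := by
    rw [Measure.restrict_restrict measurableSet_Iio, Set.Iio_inter_Ioi]
  have hGint : IntegrableOn G (Set.Ioi 0) := by
    rw [hGind, IntegrableOn, integrable_indicator_iff measurableSet_Iio, IntegrableOn, hrr]
    exact hB
  obtain ⟨hconv_int, hconv_eq⟩ := aux_conv_fubini F G hFint hGint
  have hpt : Set.EqOn (fun x : ℝ => mulConv f (hPlus h) x * (x:ℂ) ^ s / (x:ℂ))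
      (fun x : ℝ => ∫ y in Set.Ioi (0:ℝ), F (x / y) * G y / (y:ℂ)) (Set.Ioi 0) := by
    intro x hx
    have hx0 : (0:ℝ) < x := hx
    simp only [mulConv]
    rw [mul_div_assoc, ← integral_mul_const]
    refine setIntegral_congr_fun measurableSet_Ioi fun y hy => ?_
    have hy0 : (0:ℝ) < y := hy
    have hu0 : (0:ℝ) < x / y := div_pos hx0 hy0
    have hcp : (x:ℂ) ^ s = ((x / y : ℝ) : ℂ) ^ s * ((y : ℝ) : ℂ) ^ s := by
      rw [← Complex.mul_cpow_ofReal_nonneg hu0.le hy0.le, ← Complex.ofReal_mul,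
        div_mul_cancel₀ _ hy0.ne']
    have hyne : (y:ℂ) ≠ 0 := Complex.ofReal_ne_zero.mpr hy0.ne'
    have hxne : (x:ℂ) ≠ 0 := Complex.ofReal_ne_zero.mpr hx0.ne'
    have hune : ((x / y : ℝ) : ℂ) ≠ 0 := Complex.ofReal_ne_zero.mpr hu0.ne'
    simp only [hFdef, hGdef]
    rw [hcp]
    field_simp
    have hu : ((x / y : ℝ) : ℂ) * (y:ℂ) = x := by
      rw [Complex.ofReal_div, div_mul_cancel₀ _ hyne]
    linear_combination (f (x / y) * hPlus h y * ((x / y : ℝ) : ℂ) ^ s * (y:ℂ) ^ s) * hu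
  refine ⟨?_, hB, ?_⟩
  · exact (integrableOn_congr_fun hpt measurableSet_Ioi).mpr hconv_int
  · have h1 : mellinT (mulConv f (hPlus h)) s
        = ∫ x in Set.Ioi (0:ℝ), ∫ y in Set.Ioi (0:ℝ), F (x / y) * G y / (y:ℂ) := by
      rw [mellinT]
      exact setIntegral_congr_fun measurableSet_Ioi hpt
    have h2 : (∫ y in Set.Ioi (0:ℝ), G y)
        = ∫ x in Set.Ioo (0:ℝ) 1, h x * (x:ℂ) ^ s / (x:ℂ) := by
      rw [hGind, integral_indicator measurableSet_Iio, hrr]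
    have h3 : mellinT f s = ∫ x in Set.Ioi (0:ℝ), F x := rfl
    rw [h1, hconv_eq, h2, h3]
end
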